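/- arXiv:2305.16271 — 4 statements merged into one kernel-verified Lean document; each statement's English description precedes it below -/
import Mathlib

section
/- Let 𝔽 be a field. Every reduced matrix-model bigraded complex over 𝔽 is isomorphic, via a homogeneous change of basis, to a matrix-model bigraded complex over 𝔽 that is vertically simplified. -/
/-- A *matrix-model bigraded complex* over a field `F` with `m` generators: a bigrading
`gr = (grw, grz) : Fin m → ℤ × ℤ` with `grw i ≡ grz i (mod 2)`, and an `m × m` matrix `d`
over `F` with `d · d = 0` whose entry `d i j` vanishes unless `grw j - grw i` is odd and
both `grw j - grw i` and `grz j - grz i` are at least `-1`. -/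
structure BigradedComplex (F : Type) [Field F] (m : ℕ) where
  grw : Fin m → ℤ
  grz : Fin m → ℤ
  parity : ∀ i, grw i % 2 = grz i % 2
  d : Matrix (Fin m) (Fin m) F
  d_sq : d * d = 0
  d_supp : ∀ i j, d i j ≠ 0 →
    Odd (grw j - grw i) ∧ -1 ≤ grw j - grw i ∧ -1 ≤ grz j - grz i

namespace BigradedComplex

variable {F : Type} [Field F] {m m' : ℕ}

/-- A matrix-model bigraded complex is *reduced* if `d i j = 0` whenever
`grw j = grw i - 1` and `grz j = grz i - 1`. -/
def Reduced (C : BigradedComplex F m) : Prop :=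
  ∀ i j, C.grw j = C.grw i - 1 → C.grz j = C.grz i - 1 → C.d i j = 0

open Classical in
/-- A matrix-model bigraded complex is *vertically simplified* if each index `k` is
involved in at most one vertical arrow: the number of indices `j` with `d k j ≠ 0` and
`grw j = grw k - 1`, plus the number of indices `j` with `d j k ≠ 0` and
`grw k = grw j - 1`, is at most `1`. -/
def VerticallySimplified (C : BigradedComplex F m) : Prop :=
  ∀ k : Fin m,
    (Finset.univ.filter fun j => C.d k j ≠ 0 ∧ C.grw j = C.grw k - 1).card +
      (Finset.univ.filter fun j => C.d j k ≠ 0 ∧ C.grw k = C.grw j - 1).card ≤ 1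

/-- A degree-`(0,0)` chain map from `C` to `C'`: an `m × m'` matrix `f` over `F` whose
entry `f i j` vanishes unless `C'.grw j - C.grw i` and `C'.grz j - C.grz i` are both even
and nonnegative, satisfying `d · f = f · d'`. -/
def IsChainMap (C : BigradedComplex F m) (C' : BigradedComplex F m')
    (f : Matrix (Fin m) (Fin m') F) : Prop :=
  (∀ i j, f i j ≠ 0 →
      Even (C'.grw j - C.grw i) ∧ 0 ≤ C'.grw j - C.grw i ∧
      Even (C'.grz j - C.grz i) ∧ 0 ≤ C'.grz j - C.grz i) ∧
  C.d * f = f * C'.d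

/-- `C` and `C'` are isomorphic via a homogeneous change of basis: there are
degree-`(0,0)` chain maps `f : C → C'` and `g : C' → C` with `f · g` and `g · f`
equal to identity matrices. -/
def Isomorphic (C : BigradedComplex F m) (C' : BigradedComplex F m') : Prop :=
  ∃ (f : Matrix (Fin m) (Fin m') F) (g : Matrix (Fin m') (Fin m) F),
    IsChainMap C C' f ∧ IsChainMap C' C g ∧ f * g = 1 ∧ g * f = 1

end BigradedComplex

namespace BigradedComplex

variable {F : Type} [Field F] {m m' m'' : ℕ}

lemma isomorphic_refl (C : BigradedComplex F m) : C.Isomorphic C := by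
  refine ⟨1, 1, ⟨?_, by simp⟩, ⟨?_, by simp⟩, by simp, by simp⟩ <;>
  · intro i j h
    have : i = j := by
      by_contra hne
      exact h (Matrix.one_apply_ne hne)
    subst this
    simp

lemma isomorphic_trans {C : BigradedComplex F m} {C' : BigradedComplex F m'}
    {C'' : BigradedComplex F m''} (h1 : C.Isomorphic C') (h2 : C'.Isomorphic C'') :
    C.Isomorphic C'' := by
  obtain ⟨f1, g1, ⟨hf1s, hf1e⟩, ⟨hg1s, hg1e⟩, hfg1, hgf1⟩ := h1
  obtain ⟨f2, g2, ⟨hf2s, hf2e⟩, ⟨hg2s, hg2e⟩, hfg2, hgf2⟩ := h2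
  have comp_supp : ∀ {a b c : ℕ} (A : BigradedComplex F a) (B : BigradedComplex F b)
      (D : BigradedComplex F c) (u : Matrix (Fin a) (Fin b) F) (v : Matrix (Fin b) (Fin c) F),
      (∀ i j, u i j ≠ 0 →
        Even (B.grw j - A.grw i) ∧ 0 ≤ B.grw j - A.grw i ∧
        Even (B.grz j - A.grz i) ∧ 0 ≤ B.grz j - A.grz i) →
      (∀ i j, v i j ≠ 0 →
        Even (D.grw j - B.grw i) ∧ 0 ≤ D.grw j - B.grw i ∧
        Even (D.grz j - B.grz i) ∧ 0 ≤ D.grz j - B.grz i) →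
      ∀ i j, (u * v) i j ≠ 0 →
        Even (D.grw j - A.grw i) ∧ 0 ≤ D.grw j - A.grw i ∧
        Even (D.grz j - A.grz i) ∧ 0 ≤ D.grz j - A.grz i := by
    intro a b c A B D u v hu hv i j h
    rw [Matrix.mul_apply] at h
    obtain ⟨k, -, hk⟩ := Finset.exists_ne_zero_of_sum_ne_zero h
    obtain ⟨h1, h2⟩ := mul_ne_zero_iff.mp hk
    obtain ⟨e1, p1, e2, p2⟩ := hu i k h1
    obtain ⟨e3, p3, e4, p4⟩ := hv k j h2
    simp only [Int.even_iff] at e1 e2 e3 e4 ⊢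
    refine ⟨by omega, by omega, by omega, by omega⟩
  refine ⟨f1 * f2, g2 * g1, ⟨comp_supp C C' C'' f1 f2 hf1s hf2s, ?_⟩,
    ⟨comp_supp C'' C' C g2 g1 hg2s hg1s, ?_⟩, ?_, ?_⟩
  · calc C.d * (f1 * f2) = (C.d * f1) * f2 := by rw [Matrix.mul_assoc]
    _ = f1 * (C'.d * f2) := by rw [hf1e, Matrix.mul_assoc]
    _ = (f1 * f2) * C''.d := by rw [hf2e, Matrix.mul_assoc]
  · calc C''.d * (g2 * g1) = (C''.d * g2) * g1 := by rw [Matrix.mul_assoc]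
    _ = g2 * (C'.d * g1) := by rw [hg2e, Matrix.mul_assoc]
    _ = (g2 * g1) * C.d := by rw [hg1e, Matrix.mul_assoc]
  · rw [Matrix.mul_assoc f1 f2, ← Matrix.mul_assoc f2 g2, hfg2, Matrix.one_mul, hfg1]
  · rw [Matrix.mul_assoc g2 g1, ← Matrix.mul_assoc g1 f1, hgf1, Matrix.one_mul, hgf2]

/-- Auxiliary invariant: every vertical arrow touching `L` is an isolated arrow with
both endpoints in `L`. -/
def Inv (C : BigradedComplex F m) (L : Finset (Fin m)) : Prop :=
  ∀ ⦃i j⦄, C.d i j ≠ 0 → C.grw j = C.grw i - 1 → (i ∈ L ∨ j ∈ L) →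
    i ∈ L ∧ j ∈ L ∧ (∀ k, C.d k j ≠ 0 → C.grw j = C.grw k - 1 → k = i) ∧
      (∀ k, C.d i k ≠ 0 → C.grw k = C.grw i - 1 → k = j)

lemma vert_odd_grz (C : BigradedComplex F m) {i j : Fin m} (h : C.grw j = C.grw i - 1) :
    Odd (C.grz j - C.grz i) := by
  have h1 := C.parity i
  have h2 := C.parity j
  rw [Int.odd_iff]
  omega

/-- If every vertical arrow touches `L` and `Inv C L` holds, the complex is vertically
simplified. -/
lemma vs_of_inv {C : BigradedComplex F m} {L : Finset (Fin m)} (hInv : C.Inv L)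
    (hcov : ∀ i j, C.d i j ≠ 0 → C.grw j = C.grw i - 1 → i ∈ L ∨ j ∈ L) :
    C.VerticallySimplified := by
  classical
  intro k
  set O := Finset.univ.filter fun j => C.d k j ≠ 0 ∧ C.grw j = C.grw k - 1 with hO
  set I := Finset.univ.filter fun j => C.d j k ≠ 0 ∧ C.grw k = C.grw j - 1 with hI
  rcases O.eq_empty_or_nonempty with hOe | ⟨j, hj⟩
  · rcases I.eq_empty_or_nonempty with hIe | ⟨i, hi⟩
    · simp [hOe, hIe]
    · -- I is a singleton
      rw [hI, Finset.mem_filter] at hi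
      obtain ⟨-, hdi, hgi⟩ := hi
      obtain ⟨-, -, huIn, -⟩ := hInv hdi hgi (hcov _ _ hdi hgi)
      have : I ⊆ {i} := by
        intro t ht
        rw [hI, Finset.mem_filter] at ht
        simp [huIn t ht.2.1 ht.2.2]
      have := Finset.card_le_card this
      simp only [Finset.card_singleton] at this
      simp [hOe]
      omega
  · -- O is nonempty with element j
    rw [hO, Finset.mem_filter] at hj
    obtain ⟨-, hdj, hgj⟩ := hj
    obtain ⟨-, -, -, huOut⟩ := hInv hdj hgj (hcov _ _ hdj hgj)
    have hOs : O ⊆ {j} := by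
      intro t ht
      rw [hO, Finset.mem_filter] at ht
      simp [huOut t ht.2.1 ht.2.2]
    have hOcard : O.card ≤ 1 := by
      have := Finset.card_le_card hOs
      simpa using this
    -- I must be empty
    have hIe : I = ∅ := by
      rw [Finset.eq_empty_iff_forall_notMem]
      intro i hi
      rw [hI, Finset.mem_filter] at hi
      obtain ⟨-, hdi, hgi⟩ := hi
      -- chain i → k → j contradicts d² = 0
      obtain ⟨-, -, -, huOut'⟩ := hInv hdi hgi (hcov _ _ hdi hgi)
      have hz : (C.d * C.d) i j = 0 := by rw [C.d_sq]; simp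
      rw [Matrix.mul_apply] at hz
      rw [Finset.sum_eq_single k] at hz
      · exact mul_ne_zero hdi hdj hz
      · intro t _ htk
        by_contra hne
        obtain ⟨h1, h2⟩ := mul_ne_zero_iff.mp hne
        obtain ⟨o1, l1, -⟩ := C.d_supp i t h1
        obtain ⟨o2, l2, -⟩ := C.d_supp t j h2
        rw [Int.odd_iff] at o1 o2
        have hvt : C.grw t = C.grw i - 1 := by omega
        exact htk (huOut' t h1 hvt)
      · intro h
        exact absurd (Finset.mem_univ k) h
    simp [hIe]
    omega

section Step

variable {C : BigradedComplex F m} {L : Finset (Fin m)} {a b : Fin m}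

lemma step (hC : C.Reduced) (hInv : C.Inv L)
    (hdab : C.d a b ≠ 0) (hvab : C.grw b = C.grw a - 1) (haL : a ∉ L) (hbL : b ∉ L)
    (hmin : ∀ i j, C.d i j ≠ 0 → C.grw j = C.grw i - 1 → i ∉ L → j ∉ L →
      C.grz b - C.grz a ≤ C.grz j - C.grz i) :
    ∃ C' : BigradedComplex F m, C'.Reduced ∧ C'.Inv (insert a (insert b L)) ∧
      C.Isomorphic C' := by
  classical
  have hab : a ≠ b := by
    intro h; rw [h] at hvab; omega
  set c : Fin m → F := fun i => if i ≠ a ∧ C.grw i = C.grw a then C.d i b / C.d a b else 0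
    with hcdef
  set e : Fin m → F := fun j => if j ≠ b ∧ C.grw j = C.grw b then C.d a j / C.d a b else 0
    with hedef
  have hc : ∀ i, c i ≠ 0 → i ≠ a ∧ C.grw i = C.grw a ∧ C.d i b ≠ 0 := by
    intro i h
    rw [hcdef] at h
    simp only [ne_eq, ite_eq_right_iff, not_forall] at h
    obtain ⟨⟨h1, h2⟩, h3⟩ := h
    exact ⟨h1, h2, fun hz => h3 (by rw [hz, zero_div])⟩
  have he : ∀ j, e j ≠ 0 → j ≠ b ∧ C.grw j = C.grw b ∧ C.d a j ≠ 0 := by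
    intro j h
    rw [hedef] at h
    simp only [ne_eq, ite_eq_right_iff, not_forall] at h
    obtain ⟨⟨h1, h2⟩, h3⟩ := h
    exact ⟨h1, h2, fun hz => h3 (by rw [hz, zero_div])⟩
  have hca : c a = 0 := by rw [hcdef]; simp
  have heb : e b = 0 := by rw [hedef]; simp
  have hcL : ∀ i, c i ≠ 0 → i ∉ L := by
    intro i h hiL
    obtain ⟨h1, h2, h3⟩ := hc i h
    have hv : C.grw b = C.grw i - 1 := by omega
    exact hbL (hInv h3 hv (Or.inl hiL)).2.1
  have heL : ∀ j, e j ≠ 0 → j ∉ L := by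
    intro j h hjL
    obtain ⟨h1, h2, h3⟩ := he j h
    have hv : C.grw j = C.grw a - 1 := by omega
    exact haL (hInv h3 hv (Or.inr hjL)).1
  have hcz : ∀ i, c i ≠ 0 → 0 ≤ C.grz a - C.grz i ∧ Even (C.grz a - C.grz i) := by
    intro i h
    obtain ⟨h1, h2, h3⟩ := hc i h
    have hv : C.grw b = C.grw i - 1 := by omega
    have hm := hmin i b h3 hv (hcL i h) hbL
    have ho1 := C.vert_odd_grz hv
    have ho2 := C.vert_odd_grz hvab
    rw [Int.odd_iff] at ho1 ho2
    constructor
    · omega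
    · rw [Int.even_iff]; omega
  have hez : ∀ j, e j ≠ 0 → 0 ≤ C.grz j - C.grz b ∧ Even (C.grz j - C.grz b) := by
    intro j h
    obtain ⟨h1, h2, h3⟩ := he j h
    have hv : C.grw j = C.grw a - 1 := by omega
    have hm := hmin a j h3 hv haL (heL j h)
    have ho1 := C.vert_odd_grz hv
    have ho2 := C.vert_odd_grz hvab
    rw [Int.odd_iff] at ho1 ho2
    constructor
    · omega
    · rw [Int.even_iff]; omega
  set N : Matrix (Fin m) (Fin m) F :=
    Matrix.of fun i k => if k = a then -(c i) else if i = b then e k else 0 with hNdef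
  have hNapp : ∀ i k, N i k = if k = a then -(c i) else if i = b then e k else 0 := by
    intro i k; rw [hNdef]; rfl
  have hNs : ∀ i p, N i p ≠ 0 → C.grw p = C.grw i ∧ 0 ≤ C.grz p - C.grz i ∧
      Even (C.grz p - C.grz i) := by
    intro i p h
    rw [hNapp] at h
    by_cases hpa : p = a
    · subst hpa
      rw [if_pos rfl] at h
      have hci : c i ≠ 0 := fun hz => h (by rw [hz, neg_zero])
      obtain ⟨h1, h2, h3⟩ := hc i hci
      exact ⟨h2.symm, hcz i hci⟩
    · rw [if_neg hpa] at h
      by_cases hib : i = b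
      · subst hib
        rw [if_pos rfl] at h
        obtain ⟨h1, h2, h3⟩ := he p h
        exact ⟨h2.symm ▸ rfl, hez p h⟩
      · rw [if_neg hib] at h
        exact absurd rfl h
  have hNN : N * N = 0 := by
    ext i k
    rw [Matrix.mul_apply, Matrix.zero_apply]
    apply Finset.sum_eq_zero
    intro p _
    by_cases hpa : p = a
    · have h2 : N p k = 0 := by
        rw [hNapp, hpa]
        by_cases hka : k = a
        · rw [if_pos hka, hca, neg_zero]
        · rw [if_neg hka, if_neg hab]
      rw [h2, mul_zero]
    · by_cases hib : i = b
      · by_cases hep : e p = 0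
        · have h1 : N i p = 0 := by rw [hNapp, if_neg hpa, if_pos hib, hep]
          rw [h1, zero_mul]
        · obtain ⟨q1, q2, q3⟩ := he p hep
          have h2 : N p k = 0 := by
            rw [hNapp]
            by_cases hka : k = a
            · rw [if_pos hka]
              have : c p = 0 := by
                rw [hcdef]
                simp only [ne_eq, ite_eq_right_iff]
                intro ⟨w1, w2⟩
                omega
              rw [this, neg_zero]
            · rw [if_neg hka, if_neg q1]
          rw [h2, mul_zero]
      · have h1 : N i p = 0 := by rw [hNapp, if_neg hpa, if_neg hib]
        rw [h1, zero_mul]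
  set f : Matrix (Fin m) (Fin m) F := 1 - N with hfdef
  set g : Matrix (Fin m) (Fin m) F := 1 + N with hgdef
  have hfg : f * g = 1 := by
    rw [hfdef, hgdef]
    have : (1 - N) * (1 + N) = 1 - N * N := by noncomm_ring
    rw [this, hNN, sub_zero]
  have hgf : g * f = 1 := by
    rw [hfdef, hgdef]
    have : (1 + N) * (1 - N) = 1 - N * N := by noncomm_ring
    rw [this, hNN, sub_zero]
  have hfs : ∀ i p, f i p ≠ 0 → C.grw p = C.grw i ∧ 0 ≤ C.grz p - C.grz i ∧
      Even (C.grz p - C.grz i) := by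
    intro i p h
    by_cases hip : i = p
    · subst hip; simp
    · apply hNs
      intro hz
      rw [hfdef, Matrix.sub_apply, Matrix.one_apply_ne hip, hz, zero_sub, neg_zero] at h
      exact h rfl
  have hgs : ∀ i p, g i p ≠ 0 → C.grw p = C.grw i ∧ 0 ≤ C.grz p - C.grz i ∧
      Even (C.grz p - C.grz i) := by
    intro i p h
    by_cases hip : i = p
    · subst hip; simp
    · apply hNs
      intro hz
      rw [hgdef, Matrix.add_apply, Matrix.one_apply_ne hip, hz, add_zero] at h
      exact h rfl
  -- the key decomposition for entries of the new differential
  have hkey : ∀ i k, (g * C.d * f) i k ≠ 0 → ∃ p q,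
      (C.grw p = C.grw i ∧ 0 ≤ C.grz p - C.grz i ∧ Even (C.grz p - C.grz i)) ∧
      C.d p q ≠ 0 ∧
      (C.grw k = C.grw q ∧ 0 ≤ C.grz k - C.grz q ∧ Even (C.grz k - C.grz q)) := by
    intro i k h
    rw [Matrix.mul_apply] at h
    obtain ⟨q, -, hq⟩ := Finset.exists_ne_zero_of_sum_ne_zero h
    obtain ⟨h1, h2⟩ := mul_ne_zero_iff.mp hq
    rw [Matrix.mul_apply] at h1
    obtain ⟨p, -, hp⟩ := Finset.exists_ne_zero_of_sum_ne_zero h1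
    obtain ⟨h3, h4⟩ := mul_ne_zero_iff.mp hp
    exact ⟨p, q, hgs i p h3, h4, hfs q k h2⟩
  have hdsq : (g * C.d * f) * (g * C.d * f) = 0 := by
    have h1 : (g * C.d * f) * (g * C.d * f) = g * (C.d * ((f * g) * C.d)) * f := by
      noncomm_ring
    rw [h1, hfg, Matrix.one_mul, C.d_sq, Matrix.mul_zero, Matrix.zero_mul]
  have hdsupp : ∀ i k, (g * C.d * f) i k ≠ 0 →
      Odd (C.grw k - C.grw i) ∧ -1 ≤ C.grw k - C.grw i ∧ -1 ≤ C.grz k - C.grz i := by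
    intro i k h
    obtain ⟨p, q, ⟨w1, w2, w3⟩, hdpq, ⟨w4, w5, w6⟩⟩ := hkey i k h
    obtain ⟨o1, o2, o3⟩ := C.d_supp p q hdpq
    rw [Int.odd_iff] at o1 ⊢
    rw [Int.even_iff] at w3 w6
    refine ⟨by omega, by omega, by omega⟩
  set C' : BigradedComplex F m :=
    { grw := C.grw, grz := C.grz, parity := C.parity, d := g * C.d * f,
      d_sq := hdsq, d_supp := hdsupp } with hC'def
  have hd' : C'.d = g * C.d * f := rfl
  have hgrw' : C'.grw = C.grw := rfl
  have hgrz' : C'.grz = C.grz := rfl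
  -- reducedness of C'
  have hred : C'.Reduced := by
    intro i k h1 h2
    rw [hgrw'] at h1
    rw [hgrz'] at h2
    by_contra hne
    rw [hd'] at hne
    obtain ⟨p, q, ⟨w1, w2, w3⟩, hdpq, ⟨w4, w5, w6⟩⟩ := hkey i k hne
    obtain ⟨o1, o2, o3⟩ := C.d_supp p q hdpq
    rw [Int.odd_iff] at o1
    rw [Int.even_iff] at w3 w6
    have e1 : C.grw q = C.grw p - 1 := by omega
    have e2 : C.grz q = C.grz p - 1 := by omega
    exact hdpq (hC p q e1 e2)
  -- entry formula
  have hexp : g * C.d * f = C.d + N * C.d - C.d * N - N * C.d * N := by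
    rw [hfdef, hgdef]
    noncomm_ring
  have hNd : ∀ i k, i ≠ b → (N * C.d) i k = -(c i) * C.d a k := by
    intro i k hib
    rw [Matrix.mul_apply]
    rw [Finset.sum_eq_single a]
    · rw [hNapp, if_pos rfl]
    · intro p _ hpa
      have : N i p = 0 := by rw [hNapp, if_neg hpa, if_neg hib]
      rw [this, zero_mul]
    · intro h; exact absurd (Finset.mem_univ a) h
  have hMN : ∀ (M : Matrix (Fin m) (Fin m) F) i k, k ≠ a → (M * N) i k = M i b * e k := by
    intro M i k hka
    rw [Matrix.mul_apply]
    rw [Finset.sum_eq_single b]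
    · rw [hNapp, if_neg hka, if_pos rfl]
    · intro q _ hqb
      have : N q k = 0 := by rw [hNapp, if_neg hka, if_neg hqb]
      rw [this, mul_zero]
    · intro h; exact absurd (Finset.mem_univ b) h
  have hML : ∀ i k, i ≠ b → k ≠ a → C'.d i k =
      C.d i k + -(c i) * C.d a k - C.d i b * e k - -(c i) * C.d a b * e k := by
    intro i k hib hka
    rw [hd', hexp, Matrix.sub_apply, Matrix.sub_apply, Matrix.add_apply,
      hNd i k hib, hMN C.d i k hka, hMN (N * C.d) i k hka, hNd i b hib]
  have hcol : ∀ i, C.grw b = C.grw i - 1 → i ≠ a → C'.d i b = 0 := by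
    intro i hgw hia
    have hib : i ≠ b := by intro h; rw [h] at hgw; omega
    rw [hML i b hib (Ne.symm hab)]
    have hci : c i = C.d i b / C.d a b := by
      rw [hcdef]
      simp only [ne_eq]
      rw [if_pos ⟨hia, by omega⟩]
    rw [hci, heb, neg_mul, div_mul_cancel₀ _ hdab]
    ring
  have hdab' : C'.d a b = C.d a b := by
    rw [hML a b hab (Ne.symm hab), hca, heb]
    ring
  have hrow : ∀ j, C.grw j = C.grw a - 1 → j ≠ b → C'.d a j = 0 := by
    intro j hgw hjb
    have hja : j ≠ a := by intro h; rw [h] at hgw; omega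
    rw [hML a j hab hja, hca]
    have hej : e j = C.d a j / C.d a b := by
      rw [hedef]
      simp only [ne_eq]
      rw [if_pos ⟨hjb, by omega⟩]
    rw [hej, mul_comm (C.d a b), div_mul_cancel₀ _ hdab]
    ring
  have houtb : ∀ k, C.grw k = C.grw b - 1 → C'.d b k = 0 := by
    intro k hgw
    have hz : (C'.d * C'.d) a k = 0 := by rw [C'.d_sq, Matrix.zero_apply]
    rw [Matrix.mul_apply, Finset.sum_eq_single b] at hz
    · rw [hdab'] at hz
      rcases mul_eq_zero.mp hz with h | h
      · exact absurd h hdab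
      · exact h
    · intro t _ htb
      by_cases h1 : C'.d a t = 0
      · rw [h1, zero_mul]
      · by_cases h2 : C'.d t k = 0
        · rw [h2, mul_zero]
        · exfalso
          obtain ⟨o1, o2, -⟩ := C'.d_supp a t h1
          obtain ⟨o3, o4, -⟩ := C'.d_supp t k h2
          rw [hgrw', Int.odd_iff] at o1 o3
          rw [hgrw'] at o2 o4
          have : C.grw t = C.grw a - 1 := by omega
          exact h1 (hrow t this htb)
    · intro h; exact absurd (Finset.mem_univ b) h
  have hina : ∀ k, C.grw a = C.grw k - 1 → C'.d k a = 0 := by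
    intro k hgw
    have hz : (C'.d * C'.d) k b = 0 := by rw [C'.d_sq, Matrix.zero_apply]
    rw [Matrix.mul_apply, Finset.sum_eq_single a] at hz
    · rw [hdab'] at hz
      rcases mul_eq_zero.mp hz with h | h
      · exact h
      · exact absurd h hdab
    · intro t _ hta
      by_cases h1 : C'.d k t = 0
      · rw [h1, zero_mul]
      · by_cases h2 : C'.d t b = 0
        · rw [h2, mul_zero]
        · exfalso
          obtain ⟨o1, o2, -⟩ := C'.d_supp k t h1
          obtain ⟨o3, o4, -⟩ := C'.d_supp t b h2
          rw [hgrw', Int.odd_iff] at o1 o3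
          rw [hgrw'] at o2 o4
          have : C.grw b = C.grw t - 1 := by omega
          exact h2 (hcol t this hta)
    · intro h; exact absurd (Finset.mem_univ a) h
  -- entries of vertical pairs touching L are unchanged
  have hG : ∀ i k, C.grw k = C.grw i - 1 → (i ∈ L ∨ k ∈ L) → C'.d i k = C.d i k := by
    intro i k hgw hmem
    by_cases hib : i = b
    · rw [hib] at hgw hmem ⊢
      have h1 : C'.d b k = 0 := houtb k (by omega)
      have h2 : C.d b k = 0 := by
        by_contra h
        rcases hmem with hL | hL
        · exact hbL hL
        · exact hbL (hInv h hgw (Or.inr hL)).1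
      rw [h1, h2]
    · by_cases hka : k = a
      · rw [hka] at hgw hmem ⊢
        have h1 : C'.d i a = 0 := hina i (by omega)
        have h2 : C.d i a = 0 := by
          by_contra h
          rcases hmem with hL | hL
          · exact haL (hInv h hgw (Or.inl hL)).2.1
          · exact haL hL
        rw [h1, h2]
      · rw [hML i k hib hka]
        have hiL : c i ≠ 0 → i ∉ L := hcL i
        have t1 : -(c i) * C.d a k = 0 := by
          by_cases hci : c i = 0
          · rw [hci, neg_zero, zero_mul]
          · have hinL : i ∉ L := hcL i hci
            have hkL : k ∈ L := by tauto
            have : C.d a k = 0 := by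
              by_contra h
              have hgw2 : C.grw k = C.grw a - 1 := by
                obtain ⟨-, h2, -⟩ := hc i hci
                omega
              exact haL (hInv h hgw2 (Or.inr hkL)).1
            rw [this, mul_zero]
        have t2 : C.d i b * e k = 0 := by
          by_cases hek : e k = 0
          · rw [hek, mul_zero]
          · have hknL : k ∉ L := heL k hek
            have hiL2 : i ∈ L := by tauto
            have : C.d i b = 0 := by
              by_contra h
              have hgw2 : C.grw b = C.grw i - 1 := by
                obtain ⟨-, h2, -⟩ := he k hek
                omega
              exact hbL (hInv h hgw2 (Or.inl hiL2)).2.1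
            rw [this, zero_mul]
        have t3 : -(c i) * C.d a b * e k = 0 := by
          by_cases hci : c i = 0
          · rw [hci, neg_zero, zero_mul, zero_mul]
          · by_cases hek : e k = 0
            · rw [hek, mul_zero]
            · exact absurd (by tauto : i ∈ L ∨ k ∈ L)
                (by simp [hcL i hci, heL k hek])
        rw [t1, t2, t3]
        ring
  have hintoB : ∀ t, C'.d t b ≠ 0 → C.grw b = C.grw t - 1 → t = a := by
    intro t h hg
    by_contra hta
    exact h (hcol t hg hta)
  have hfromA : ∀ t, C'.d a t ≠ 0 → C.grw t = C.grw a - 1 → t = b := by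
    intro t h hg
    by_contra htb
    exact h (hrow t hg htb)
  have hInv' : C'.Inv (insert a (insert b L)) := by
    intro i j hdij hv hmem
    rw [hgrw'] at hv
    by_cases hib : i = b
    · rw [hib] at hdij hv
      exact absurd (houtb j (by omega)) hdij
    by_cases hja : j = a
    · rw [hja] at hdij hv
      exact absurd (hina i (by omega)) hdij
    by_cases hjb : j = b
    · rw [hjb] at hdij hv
      have hia : i = a := hintoB i hdij hv
      rw [hia, hjb]
      refine ⟨Finset.mem_insert_self a _, by simp, ?_, ?_⟩
      · intro k hk hgk
        rw [hgrw'] at hgk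
        exact hintoB k hk hgk
      · intro k hk hgk
        rw [hgrw'] at hgk
        exact hfromA k hk hgk
    by_cases hia : i = a
    · rw [hia] at hdij hv
      exact absurd (hfromA j hdij hv) hjb
    -- now i, j avoid a and b
    have hmem' : i ∈ L ∨ j ∈ L := by
      simp only [Finset.mem_insert] at hmem
      tauto
    have heq : C'.d i j = C.d i j := hG i j hv hmem'
    rw [heq] at hdij
    obtain ⟨hiL, hjL, uIn, uOut⟩ := hInv hdij hv hmem'
    refine ⟨by simp [Finset.mem_insert, hiL], by simp [Finset.mem_insert, hjL], ?_, ?_⟩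
    · intro k hk hgk
      rw [hgrw'] at hgk
      by_cases hkb : k = b
      · exfalso
        rw [hkb] at hk hgk
        exact hk (houtb j (by omega))
      by_cases hka : k = a
      · exfalso
        rw [hka] at hk hgk
        exact hjb (hfromA j hk hgk)
      · rw [hG k j hgk (Or.inr hjL)] at hk
        exact uIn k hk hgk
    · intro k hk hgk
      rw [hgrw'] at hgk
      by_cases hka : k = a
      · exfalso
        rw [hka] at hk hgk
        exact hk (hina i (by omega))
      by_cases hkb : k = b
      · exfalso
        rw [hkb] at hk hgk
        exact hia (hintoB i hk hgk)
      · rw [hG i k hgk (Or.inl hiL)] at hk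
        exact uOut k hk hgk
  have hiso : C.Isomorphic C' := by
    refine ⟨f, g, ⟨?_, ?_⟩, ⟨?_, ?_⟩, hfg, hgf⟩
    · intro i j h
      obtain ⟨w1, w2, w3⟩ := hfs i j h
      rw [hgrw', hgrz']
      refine ⟨by rw [w1]; simp, by omega, w3, w2⟩
    · show C.d * f = f * C'.d
      have h2 : f * (g * C.d * f) = (f * g) * (C.d * f) := by noncomm_ring
      rw [hd', h2, hfg, Matrix.one_mul]
    · intro i j h
      obtain ⟨w1, w2, w3⟩ := hgs i j h
      rw [hgrw', hgrz']
      refine ⟨by rw [w1]; simp, by omega, w3, w2⟩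
    · show C'.d * g = g * C.d
      have h2 : (g * C.d * f) * g = (g * C.d) * (f * g) := by noncomm_ring
      rw [hd', h2, hfg, Matrix.mul_one]
  exact ⟨C', hred, hInv', hiso⟩

end Step

lemma main_ind : ∀ (n : ℕ) (C : BigradedComplex F m) (L : Finset (Fin m)),
    C.Reduced → C.Inv L → Lᶜ.card ≤ n →
    ∃ C' : BigradedComplex F m, C'.VerticallySimplified ∧ C.Isomorphic C' := by
  classical
  intro n
  induction n with
  | zero =>
    intro C L hred hinv hcard
    have hall : ∀ i : Fin m, i ∈ L := by
      intro i
      by_contra h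
      have h1 : i ∈ Lᶜ := Finset.mem_compl.mpr h
      have := Finset.card_pos.mpr ⟨i, h1⟩
      omega
    exact ⟨C, vs_of_inv hinv (fun i j _ _ => Or.inl (hall i)), isomorphic_refl C⟩
  | succ n ih =>
    intro C L hred hinv hcard
    by_cases hex : ∃ p : Fin m × Fin m,
        C.d p.1 p.2 ≠ 0 ∧ C.grw p.2 = C.grw p.1 - 1 ∧ p.1 ∉ L ∧ p.2 ∉ L
    · set A : Finset (Fin m × Fin m) := Finset.univ.filter fun p =>
        C.d p.1 p.2 ≠ 0 ∧ C.grw p.2 = C.grw p.1 - 1 ∧ p.1 ∉ L ∧ p.2 ∉ L with hA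
      have hAne : A.Nonempty := by
        obtain ⟨p, hp⟩ := hex
        exact ⟨p, by rw [hA, Finset.mem_filter]; exact ⟨Finset.mem_univ _, hp⟩⟩
      obtain ⟨p0, hp0, hm⟩ := A.exists_min_image (fun p => C.grz p.2 - C.grz p.1) hAne
      rw [hA, Finset.mem_filter] at hp0
      obtain ⟨-, hdab, hvab, haL, hbL⟩ := hp0
      have hmin : ∀ i j, C.d i j ≠ 0 → C.grw j = C.grw i - 1 → i ∉ L → j ∉ L →
          C.grz p0.2 - C.grz p0.1 ≤ C.grz j - C.grz i := by
        intro i j h1 h2 h3 h4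
        have hmem : ((i, j) : Fin m × Fin m) ∈ A := by
          rw [hA, Finset.mem_filter]
          exact ⟨Finset.mem_univ _, h1, h2, h3, h4⟩
        exact hm (i, j) hmem
      obtain ⟨C', hred', hinv', hiso⟩ := step hred hinv hdab hvab haL hbL hmin
      have hne : p0.1 ≠ p0.2 := by
        intro h
        rw [h] at hvab
        omega
      have hcard' : (insert p0.1 (insert p0.2 L))ᶜ.card ≤ n := by
        rw [Finset.compl_insert, Finset.compl_insert]
        have h1 : p0.1 ∈ Lᶜ.erase p0.2 :=
          Finset.mem_erase.mpr ⟨hne, Finset.mem_compl.mpr haL⟩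
        rw [Finset.card_erase_of_mem h1]
        have h2 := Finset.card_erase_le (s := Lᶜ) (a := p0.2)
        omega
      obtain ⟨C'', hvs, hiso2⟩ := ih C' (insert p0.1 (insert p0.2 L)) hred' hinv' hcard'
      exact ⟨C'', hvs, isomorphic_trans hiso hiso2⟩
    · refine ⟨C, vs_of_inv hinv ?_, isomorphic_refl C⟩
      intro i j h1 h2
      by_contra h
      push_neg at h
      exact hex ⟨(i, j), h1, h2, h.1, h.2⟩

end BigradedComplex


/-- Every reduced matrix-model bigraded complex over a field `F` is isomorphic, via a
homogeneous change of basis, to a matrix-model bigraded complex over `F` that is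
vertically simplified. -/
theorem exists_verticallySimplified_isomorphic (F : Type) [Field F] (m : ℕ)
    (C : BigradedComplex F m) (hC : C.Reduced) :
    ∃ (m' : ℕ) (C' : BigradedComplex F m'),
      C'.VerticallySimplified ∧ C.Isomorphic C' := by
  classical
  obtain ⟨C', hvs, hiso⟩ := BigradedComplex.main_ind ((∅ : Finset (Fin m))ᶜ).card C ∅ hC
    (fun i j _ _ hmem => by simp at hmem) le_rfl
  exact ⟨m, C', hvs, hiso⟩
end

section
/- Let 𝔽 be a field. Every reduced matrix-model bigraded complex over 𝔽 is isomorphic, via a homogeneous change of basis, to a matrix-model bigraded complex over 𝔽 that is horizontally simplified. -/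
namespace BigradedComplex

variable {F : Type} [Field F] {m m' : ℕ}

open Classical in
/-- A matrix-model bigraded complex is *horizontally simplified* if each index `k` is
involved in at most one horizontal arrow: the number of indices `j` with `d k j ≠ 0` and
`grz j = grz k - 1`, plus the number of indices `j` with `d j k ≠ 0` and
`grz k = grz j - 1`, is at most `1`. -/
def HorizontallySimplified (C : BigradedComplex F m) : Prop :=
  ∀ k : Fin m,
    (Finset.univ.filter fun j => C.d k j ≠ 0 ∧ C.grz j = C.grz k - 1).card +
      (Finset.univ.filter fun j => C.d j k ≠ 0 ∧ C.grz k = C.grz j - 1).card ≤ 1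

end BigradedComplex


namespace HSimp

variable {F : Type} [Field F] {m : ℕ}

variable (w z : Fin m → ℤ)

def Hsupp (d : Matrix (Fin m) (Fin m) F) : Prop :=
  ∀ i j, d i j ≠ 0 → Odd (w j - w i) ∧ -1 ≤ w j - w i ∧ -1 ≤ z j - z i

def Filt (P : Matrix (Fin m) (Fin m) F) : Prop :=
  ∀ i j, P i j ≠ 0 → z j = z i ∧ Even (w j - w i) ∧ w i ≤ w j

open Classical in
noncomputable def rowH (d : Matrix (Fin m) (Fin m) F) (k : Fin m) : Finset (Fin m) :=
  Finset.univ.filter fun j => d k j ≠ 0 ∧ z j = z k - 1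

open Classical in
noncomputable def colH (d : Matrix (Fin m) (Fin m) F) (k : Fin m) : Finset (Fin m) :=
  Finset.univ.filter fun j => d j k ≠ 0 ∧ z k = z j - 1

lemma mem_rowH {d : Matrix (Fin m) (Fin m) F} {k j : Fin m} :
    j ∈ rowH z d k ↔ d k j ≠ 0 ∧ z j = z k - 1 := by
  simp [rowH]

lemma mem_colH {d : Matrix (Fin m) (Fin m) F} {k j : Fin m} :
    j ∈ colH z d k ↔ d j k ≠ 0 ∧ z k = z j - 1 := by
  simp [colH]

def Iso (d : Matrix (Fin m) (Fin m) F) (k : Fin m) : Prop :=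
  (rowH z d k).card + (colH z d k).card ≤ 1

def HS (d : Matrix (Fin m) (Fin m) F) : Prop := ∀ k, Iso z d k

def Inv (S : Finset (Fin m)) (d : Matrix (Fin m) (Fin m) F) : Prop :=
  ∀ i j, d i j ≠ 0 → z j = z i - 1 → (i ∉ S ∨ j ∉ S) →
    (i ∉ S ∧ j ∉ S) ∧ Iso z d i ∧ Iso z d j

lemma filt_one : Filt (F := F) w z 1 := by
  intro i j h
  have hij : i = j := by
    by_contra hne
    exact h (Matrix.one_apply_ne hne)
  subst hij
  exact ⟨rfl, by simp, le_refl _⟩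

lemma mul_ne_zero_exists {A B : Matrix (Fin m) (Fin m) F} {i j : Fin m}
    (h : (A * B) i j ≠ 0) : ∃ k, A i k ≠ 0 ∧ B k j ≠ 0 := by
  rw [Matrix.mul_apply] at h
  obtain ⟨k, _, hk⟩ := Finset.exists_ne_zero_of_sum_ne_zero h
  exact ⟨k, fun h0 => hk (by simp [h0]), fun h0 => hk (by simp [h0])⟩

lemma filt_mul {P Q : Matrix (Fin m) (Fin m) F} (hP : Filt w z P) (hQ : Filt w z Q) :
    Filt w z (P * Q) := by
  intro i j h
  obtain ⟨k, h1, h2⟩ := mul_ne_zero_exists h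
  obtain ⟨hz1, he1, hw1⟩ := hP i k h1
  obtain ⟨hz2, he2, hw2⟩ := hQ k j h2
  refine ⟨hz2.trans hz1, ?_, le_trans hw1 hw2⟩
  rw [Int.even_iff] at he1 he2 ⊢
  omega

lemma hsupp_conj {P Q d : Matrix (Fin m) (Fin m) F} (hP : Filt w z P) (hQ : Filt w z Q)
    (hd : Hsupp w z d) : Hsupp w z (P * d * Q) := by
  intro i j h
  obtain ⟨l, h1, h2⟩ := mul_ne_zero_exists h
  obtain ⟨k, h3, h4⟩ := mul_ne_zero_exists h1
  obtain ⟨hz1, he1, hw1⟩ := hP i k h3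
  obtain ⟨ho, hwd, hzd⟩ := hd k l h4
  obtain ⟨hz2, he2, hw2⟩ := hQ l j h2
  rw [Int.even_iff] at he1 he2
  rw [Int.odd_iff] at ho ⊢
  refine ⟨by omega, by omega, by omega⟩

lemma zdiag (hpar : ∀ i, w i % 2 = z i % 2) {d : Matrix (Fin m) (Fin m) F}
    (hd : Hsupp w z d) {i j : Fin m} (hz : z j = z i) : d i j = 0 := by
  by_contra h
  obtain ⟨ho, -, -⟩ := hd i j h
  rw [Int.odd_iff] at ho
  have h1 := hpar i
  have h2 := hpar j
  omega

lemma filt_one_add {X : Matrix (Fin m) (Fin m) F}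
    (hX : ∀ a b, X a b ≠ 0 → z b = z a ∧ Even (w b - w a) ∧ w a ≤ w b) :
    Filt w z (1 + X) := by
  intro i j h
  by_cases hij : i = j
  · subst hij; exact ⟨rfl, by simp, le_refl _⟩
  · apply hX
    intro h0
    apply h
    simp [Matrix.add_apply, Matrix.one_apply_ne hij, h0]

lemma filt_one_sub {X : Matrix (Fin m) (Fin m) F}
    (hX : ∀ a b, X a b ≠ 0 → z b = z a ∧ Even (w b - w a) ∧ w a ≤ w b) :
    Filt w z (1 - X) := by
  rw [sub_eq_add_neg]
  apply filt_one_add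
  intro a b h
  exact hX a b (by simpa using h)

lemma conj_sq_zero {P Q d : Matrix (Fin m) (Fin m) F} (h : Q * P = 1) (hdd : d * d = 0) :
    (P * d * Q) * (P * d * Q) = 0 := by
  calc (P * d * Q) * (P * d * Q) = P * (d * (Q * P) * d) * Q := by noncomm_ring
  _ = P * (d * d) * Q := by rw [h, Matrix.mul_one]
  _ = 0 := by rw [hdd]; simp

/-- Row-type elementary matrix: `N a b = if a = r then u b else 0`. -/
def rN (r : Fin m) (u : Fin m → F) : Matrix (Fin m) (Fin m) F :=
  Matrix.of fun a b => if a = r then u b else 0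

lemma rN_mul (r : Fin m) (u : Fin m → F) (d : Matrix (Fin m) (Fin m) F) (a b : Fin m) :
    (rN r u * d) a b = if a = r then ∑ j, u j * d j b else 0 := by
  rw [Matrix.mul_apply]
  by_cases h : a = r
  · simp [rN, h]
  · simp [rN, h]

lemma mul_rN (r : Fin m) (u : Fin m → F) (d : Matrix (Fin m) (Fin m) F) (a b : Fin m) :
    (d * rN r u) a b = d a r * u b := by
  rw [Matrix.mul_apply]
  simp only [rN, Matrix.of_apply, mul_ite, mul_zero]
  rw [Finset.sum_ite_eq' Finset.univ r (fun x => d a x * u b)]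
  simp

lemma rN_sq (r : Fin m) (u : Fin m → F) (hur : u r = 0) : rN r u * rN r u = 0 := by
  ext a b
  rw [mul_rN]
  simp [rN, hur]

lemma rN_inv₁ (r : Fin m) (u : Fin m → F) (hur : u r = 0) :
    (1 + rN r u) * (1 - rN r u) = 1 := by
  have h := rN_sq r u hur
  noncomm_ring
  rw [h]
  simp

lemma rN_inv₂ (r : Fin m) (u : Fin m → F) (hur : u r = 0) :
    (1 - rN r u) * (1 + rN r u) = 1 := by
  have h := rN_sq r u hur
  noncomm_ring
  rw [h]
  simp

lemma rowOp_apply (r : Fin m) (u : Fin m → F) (d : Matrix (Fin m) (Fin m) F)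
    (hu : ∀ j, u j ≠ 0 → d j r = 0) (a b : Fin m) :
    ((1 + rN r u) * d * (1 - rN r u)) a b
      = d a b + (if a = r then ∑ j, u j * d j b else 0) - d a r * u b := by
  have hNdN : rN r u * d * rN r u = 0 := by
    ext x y
    rw [mul_rN, rN_mul]
    simp only [Matrix.zero_apply]
    have hs : ∑ j, u j * d j r = 0 := by
      apply Finset.sum_eq_zero
      intro j _
      by_cases hj : u j = 0
      · simp [hj]
      · simp [hu j hj]
    by_cases h : x = r
    · rw [if_pos h, hs, zero_mul]
    · rw [if_neg h, zero_mul]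
  have expand : (1 + rN r u) * d * (1 - rN r u)
      = d + rN r u * d - d * rN r u - rN r u * d * rN r u := by
    noncomm_ring
  rw [expand, hNdN]
  simp only [Matrix.sub_apply, Matrix.add_apply, Matrix.zero_apply, sub_zero]
  rw [rN_mul, mul_rN]

/-- Column-type elementary matrix: `M a b = if b = c then v a else 0`. -/
def cM (c : Fin m) (v : Fin m → F) : Matrix (Fin m) (Fin m) F :=
  Matrix.of fun a b => if b = c then v a else 0

lemma cM_mul (c : Fin m) (v : Fin m → F) (d : Matrix (Fin m) (Fin m) F) (a b : Fin m) :
    (cM c v * d) a b = v a * d c b := by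
  rw [Matrix.mul_apply]
  simp only [cM, Matrix.of_apply, ite_mul, zero_mul]
  rw [Finset.sum_ite_eq' Finset.univ c (fun x => v a * d x b)]
  simp

lemma mul_cM (c : Fin m) (v : Fin m → F) (d : Matrix (Fin m) (Fin m) F) (a b : Fin m) :
    (d * cM c v) a b = if b = c then ∑ i, d a i * v i else 0 := by
  rw [Matrix.mul_apply]
  by_cases h : b = c
  · simp [cM, h]
  · simp [cM, h]

lemma cM_sq (c : Fin m) (v : Fin m → F) (hvc : v c = 0) : cM c v * cM c v = 0 := by
  ext a b
  rw [cM_mul]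
  simp [cM, hvc]

lemma cM_inv₁ (c : Fin m) (v : Fin m → F) (hvc : v c = 0) :
    (1 + cM c v) * (1 - cM c v) = 1 := by
  have h := cM_sq c v hvc
  noncomm_ring
  rw [h]
  simp

lemma cM_inv₂ (c : Fin m) (v : Fin m → F) (hvc : v c = 0) :
    (1 - cM c v) * (1 + cM c v) = 1 := by
  have h := cM_sq c v hvc
  noncomm_ring
  rw [h]
  simp

lemma colOp_apply (c : Fin m) (v : Fin m → F) (d : Matrix (Fin m) (Fin m) F)
    (hv : ∀ i, v i ≠ 0 → d c i = 0) (a b : Fin m) :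
    ((1 + cM c v) * d * (1 - cM c v)) a b
      = d a b + v a * d c b - (if b = c then ∑ i, d a i * v i else 0) := by
  have hMdM : cM c v * d * cM c v = 0 := by
    ext x y
    rw [Matrix.mul_assoc, cM_mul, mul_cM]
    simp only [Matrix.zero_apply]
    have hs : ∑ i, d c i * v i = 0 := by
      apply Finset.sum_eq_zero
      intro i _
      by_cases hi : v i = 0
      · simp [hi]
      · simp [hv i hi]
    by_cases h : y = c
    · rw [if_pos h, hs, mul_zero]
    · rw [if_neg h, mul_zero]
  have expand : (1 + cM c v) * d * (1 - cM c v)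
      = d + cM c v * d - d * cM c v - cM c v * d * cM c v := by
    noncomm_ring
  rw [expand, hMdM]
  simp only [Matrix.sub_apply, Matrix.add_apply, Matrix.zero_apply, sub_zero]
  rw [cM_mul, mul_cM]

lemma no_inner (S : Finset (Fin m)) (d : Matrix (Fin m) (Fin m) F) (hinv : Inv z S d)
    (hno : ∀ i j, d i j ≠ 0 → z j = z i - 1 → i ∉ S ∨ j ∉ S) : HS z d := by
  intro k
  by_cases hr : (rowH z d k).Nonempty
  · obtain ⟨j, hj⟩ := hr
    rw [mem_rowH] at hj
    exact (hinv k j hj.1 hj.2 (hno k j hj.1 hj.2)).2.1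
  by_cases hc : (colH z d k).Nonempty
  · obtain ⟨j, hj⟩ := hc
    rw [mem_colH] at hj
    exact (hinv j k hj.1 hj.2 (hno j k hj.1 hj.2)).2.2
  · rw [Finset.not_nonempty_iff_eq_empty] at hr hc
    unfold Iso
    rw [hr, hc]
    simp


lemma key (hpar : ∀ i, w i % 2 = z i % 2) :
    ∀ (n : ℕ) (S : Finset (Fin m)) (d : Matrix (Fin m) (Fin m) F), S.card ≤ n →
      d * d = 0 → Hsupp w z d → Inv z S d →
      ∃ P Q : Matrix (Fin m) (Fin m) F, Filt w z P ∧ Filt w z Q ∧ P * Q = 1 ∧ Q * P = 1 ∧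
        HS z (P * d * Q) := by
  intro n
  induction n with
  | zero =>
    intro S d hcard hdd hsupp hinv
    refine ⟨1, 1, filt_one w z, filt_one w z, one_mul 1, one_mul 1, ?_⟩
    rw [one_mul, Matrix.mul_one]
    apply no_inner z S d hinv
    intro i j _ _
    have hS : S = ∅ := Finset.card_eq_zero.mp (le_antisymm hcard (Nat.zero_le _))
    simp [hS]
  | succ n ih =>
    intro S d hcard hdd hsupp hinv
    by_cases hex : ∃ p : Fin m × Fin m, p.1 ∈ S ∧ p.2 ∈ S ∧ d p.1 p.2 ≠ 0 ∧ z p.2 = z p.1 - 1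
    case neg =>
      refine ⟨1, 1, filt_one w z, filt_one w z, one_mul 1, one_mul 1, ?_⟩
      rw [one_mul, Matrix.mul_one]
      apply no_inner z S d hinv
      intro i j hd hz
      by_contra hc
      push_neg at hc
      exact hex ⟨(i, j), hc.1, hc.2, hd, hz⟩
    case pos =>
    classical
    obtain ⟨p₀, hp₀, hminp⟩ := Finset.exists_min_image
      (Finset.univ.filter fun p : Fin m × Fin m =>
        p.1 ∈ S ∧ p.2 ∈ S ∧ d p.1 p.2 ≠ 0 ∧ z p.2 = z p.1 - 1)
      (fun p => w p.2 - w p.1)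
      (by obtain ⟨p, hp⟩ := hex; exact ⟨p, by simpa using hp⟩)
    obtain ⟨i₀, j₀⟩ := p₀
    simp only [Finset.mem_filter, Finset.mem_univ, true_and] at hp₀
    obtain ⟨hi₀S, hj₀S, hd₀, hz₀⟩ := hp₀
    have hmin : ∀ i j, i ∈ S → j ∈ S → d i j ≠ 0 → z j = z i - 1 →
        w j₀ - w i₀ ≤ w j - w i := by
      intro i j hi hj hd hz
      have := hminp (i, j) (by simp [hi, hj, hd, hz])
      simpa using this
    have hne₀ : i₀ ≠ j₀ := by
      intro h
      rw [h] at hz₀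
      omega
    have hS_of : ∀ i j, d i j ≠ 0 → z j = z i - 1 → i ∈ S → j ∈ S := by
      intro i j hd hz hi
      by_contra hj
      exact (hinv i j hd hz (Or.inr hj)).1.1 hi
    have hS_of' : ∀ i j, d i j ≠ 0 → z j = z i - 1 → j ∈ S → i ∈ S := by
      intro i j hd hz hj
      by_contra hi
      exact (hinv i j hd hz (Or.inl hi)).1.2 hj
    -- Step A : clear the horizontal entries of row i₀ other than j₀
    set u : Fin m → F := fun b => if b ≠ j₀ ∧ z b = z i₀ - 1 then d i₀ b / d i₀ j₀ else 0
      with hu_def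
    have hur : u j₀ = 0 := by rw [hu_def]; simp
    have hu_supp : ∀ b, u b ≠ 0 → b ≠ j₀ ∧ z b = z i₀ - 1 ∧ d i₀ b ≠ 0 := by
      intro b hb
      rw [hu_def] at hb
      dsimp only at hb
      split_ifs at hb with h
      · exact ⟨h.1, h.2, fun h0 => hb (by rw [h0]; simp)⟩
      · exact absurd rfl hb
    have hu_val : ∀ b, b ≠ j₀ → z b = z i₀ - 1 → u b = d i₀ b / d i₀ j₀ := by
      intro b h1 h2
      rw [hu_def]
      simp [h1, h2]
    have hu_r : ∀ j, u j ≠ 0 → d j j₀ = 0 := by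
      intro j hj
      have h := (hu_supp j hj).2.1
      exact zdiag w z hpar hsupp (by omega)
    have hu_S : ∀ b, u b ≠ 0 → b ∈ S := by
      intro b hb
      obtain ⟨h1, h2, h3⟩ := hu_supp b hb
      exact hS_of i₀ b h3 h2 hi₀S
    have hNfacts : ∀ a b, rN j₀ u a b ≠ 0 → z b = z a ∧ Even (w b - w a) ∧ w a ≤ w b := by
      intro a b h
      have haj : a = j₀ ∧ u b ≠ 0 := by
        by_cases h1 : a = j₀
        · exact ⟨h1, by simpa [rN, h1] using h⟩
        · exact absurd (by simp [rN, h1]) h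
      obtain ⟨h1, h2⟩ := haj
      rw [h1]
      obtain ⟨hbj, hzb, hdb⟩ := hu_supp b h2
      have hbS := hu_S b h2
      have hm := hmin i₀ b hi₀S hbS hdb hzb
      have ho1 := (hsupp i₀ b hdb).1
      have ho2 := (hsupp i₀ j₀ hd₀).1
      rw [Int.odd_iff] at ho1 ho2
      refine ⟨by omega, ?_, by omega⟩
      rw [Int.even_iff]
      omega
    have hfN₁ : Filt w z (1 + rN j₀ u) := filt_one_add w z hNfacts
    have hfN₂ : Filt w z (1 - rN j₀ u) := filt_one_sub w z hNfacts
    set d₁ : Matrix (Fin m) (Fin m) F := (1 + rN j₀ u) * d * (1 - rN j₀ u) with hd₁_def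
    have hd₁app : ∀ a b, d₁ a b
        = d a b + (if a = j₀ then ∑ j, u j * d j b else 0) - d a j₀ * u b := by
      intro a b
      rw [hd₁_def]
      exact rowOp_apply j₀ u d hu_r a b
    have hdd₁ : d₁ * d₁ = 0 := by
      rw [hd₁_def]
      exact conj_sq_zero (rN_inv₂ j₀ u hur) hdd
    have hsupp₁ : Hsupp w z d₁ := by
      rw [hd₁_def]
      exact hsupp_conj w z hfN₁ hfN₂ hsupp
    have hsum₀ : ∑ j, u j * d j j₀ = 0 := by
      apply Finset.sum_eq_zero
      intro j _
      by_cases hj : u j = 0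
      · simp [hj]
      · simp [hu_r j hj]
    have f2 : ∀ a, d₁ a j₀ = d a j₀ := by
      intro a
      rw [hd₁app, hsum₀, hur]
      simp
    have f1a : d₁ i₀ j₀ = d i₀ j₀ := f2 i₀
    have f1 : ∀ b, b ≠ j₀ → z b = z i₀ - 1 → d₁ i₀ b = 0 := by
      intro b h1 h2
      rw [hd₁app, if_neg hne₀, hu_val b h1 h2]
      field_simp
      ring
    have f3 : ∀ a b, z b = z a - 1 → (a ∉ S ∨ b ∉ S) → d₁ a b = d a b := by
      intro a b hzab hout
      rw [hd₁app]
      have h2 : d a j₀ * u b = 0 := by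
        by_cases hub : u b = 0
        · simp [hub]
        · have hbS := hu_S b hub
          have ha : a ∉ S := by
            rcases hout with h | h
            · exact h
            · exact absurd hbS h
          have hzb := (hu_supp b hub).2.1
          have hdaj : d a j₀ = 0 := by
            by_contra h0
            exact (hinv a j₀ h0 (by omega) (Or.inl ha)).1.2 hj₀S
          simp [hdaj]
      have h1 : (if a = j₀ then ∑ j, u j * d j b else 0) = 0 := by
        split_ifs with haj
        · apply Finset.sum_eq_zero
          intro j _
          by_cases hj : u j = 0
          · simp [hj]
          have hjS := hu_S j hj
          have hb : b ∉ S := by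
            rcases hout with h | h
            · exact absurd (haj ▸ hj₀S) h
            · exact h
          by_cases hdj : d j b = 0
          · simp [hdj]
          exfalso
          have hzj := (hu_supp j hj).2.1
          subst haj
          exact (hinv j b hdj (by omega) (Or.inr hb)).1.1 hjS
        · rfl
      rw [h1, h2]
      ring
    -- Step B : clear the horizontal entries of column j₀ other than i₀
    set v : Fin m → F := fun a => if a ≠ i₀ ∧ z a = z i₀ then -(d₁ a j₀ / d i₀ j₀) else 0
      with hv_def
    have hvc : v i₀ = 0 := by rw [hv_def]; simp
    have hv_supp : ∀ a, v a ≠ 0 → a ≠ i₀ ∧ z a = z i₀ ∧ d₁ a j₀ ≠ 0 := by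
      intro a ha
      rw [hv_def] at ha
      dsimp only at ha
      split_ifs at ha with h
      · exact ⟨h.1, h.2, fun h0 => ha (by rw [h0]; simp)⟩
      · exact absurd rfl ha
    have hv_val : ∀ a, a ≠ i₀ → z a = z i₀ → v a = -(d₁ a j₀ / d i₀ j₀) := by
      intro a h1 h2
      rw [hv_def]
      simp [h1, h2]
    have hv_r : ∀ i, v i ≠ 0 → d₁ i₀ i = 0 := by
      intro i hi
      exact zdiag w z hpar hsupp₁ (hv_supp i hi).2.1
    have hv_S : ∀ a, v a ≠ 0 → a ∈ S := by
      intro a ha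
      obtain ⟨h1, h2, h3⟩ := hv_supp a ha
      rw [f2] at h3
      exact hS_of' a j₀ h3 (by omega) hj₀S
    have hMfacts : ∀ a b, cM i₀ v a b ≠ 0 → z b = z a ∧ Even (w b - w a) ∧ w a ≤ w b := by
      intro a b h
      have hbi : b = i₀ ∧ v a ≠ 0 := by
        by_cases h1 : b = i₀
        · exact ⟨h1, by simpa [cM, h1] using h⟩
        · exact absurd (by simp [cM, h1]) h
      obtain ⟨h1, h2⟩ := hbi
      rw [h1]
      obtain ⟨hai, hza, hda⟩ := hv_supp a h2
      rw [f2] at hda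
      have haS := hv_S a h2
      have hm := hmin a j₀ haS hj₀S hda (by omega)
      have ho1 := (hsupp a j₀ hda).1
      have ho2 := (hsupp i₀ j₀ hd₀).1
      rw [Int.odd_iff] at ho1 ho2
      refine ⟨by omega, ?_, by omega⟩
      rw [Int.even_iff]
      omega
    have hfM₁ : Filt w z (1 + cM i₀ v) := filt_one_add w z hMfacts
    have hfM₂ : Filt w z (1 - cM i₀ v) := filt_one_sub w z hMfacts
    set d₂ : Matrix (Fin m) (Fin m) F := (1 + cM i₀ v) * d₁ * (1 - cM i₀ v) with hd₂_def
    have hd₂app : ∀ a b, d₂ a b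
        = d₁ a b + v a * d₁ i₀ b - (if b = i₀ then ∑ i, d₁ a i * v i else 0) := by
      intro a b
      rw [hd₂_def]
      exact colOp_apply i₀ v d₁ hv_r a b
    have hdd₂ : d₂ * d₂ = 0 := by
      rw [hd₂_def]
      exact conj_sq_zero (cM_inv₂ i₀ v hvc) hdd₁
    have hsupp₂ : Hsupp w z d₂ := by
      rw [hd₂_def]
      exact hsupp_conj w z hfM₁ hfM₂ hsupp₁
    have g1 : d₂ i₀ j₀ = d i₀ j₀ := by
      rw [hd₂app, hvc, if_neg (Ne.symm hne₀)]
      rw [f1a]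
      ring
    have hd₂ne : d₂ i₀ j₀ ≠ 0 := by rw [g1]; exact hd₀
    have g2 : ∀ a, a ≠ i₀ → z a = z i₀ → d₂ a j₀ = 0 := by
      intro a h1 h2
      rw [hd₂app, if_neg (Ne.symm hne₀), hv_val a h1 h2, f1a]
      field_simp
      ring
    have g3 : ∀ b, b ≠ i₀ → d₂ i₀ b = d₁ i₀ b := by
      intro b h1
      rw [hd₂app, hvc, if_neg h1]
      ring
    have g4 : ∀ a b, z b = z a - 1 → (a ∉ S ∨ b ∉ S) → d₂ a b = d₁ a b := by
      intro a b hzab hout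
      rw [hd₂app]
      have h2 : v a * d₁ i₀ b = 0 := by
        by_cases hva : v a = 0
        · simp [hva]
        · have haS := hv_S a hva
          have hb : b ∉ S := by
            rcases hout with h | h
            · exact absurd haS h
            · exact h
          have hza := (hv_supp a hva).2.1
          have hbj : b ≠ j₀ := fun h => hb (h ▸ hj₀S)
          rw [f1 b hbj (by omega)]
          ring
      have h1 : (if b = i₀ then ∑ i, d₁ a i * v i else 0) = 0 := by
        split_ifs with hbi
        · apply Finset.sum_eq_zero
          intro i _
          by_cases hvi : v i = 0
          · simp [hvi]
          have hiS := hv_S i hvi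
          have ha : a ∉ S := by
            rcases hout with h | h
            · exact h
            · exact absurd (hbi ▸ hi₀S) h
          have hzi := (hv_supp i hvi).2.1
          subst hbi
          have hd1 : d₁ a i = d a i := f3 a i (by omega) (Or.inl ha)
          have hdai : d a i = 0 := by
            by_contra h0
            exact (hinv a i h0 (by omega) (Or.inl ha)).1.2 hiS
          rw [hd1, hdai]
          ring
        · rfl
      rw [h1, h2]
      ring
    have hrowi₀ : ∀ b, z b = z i₀ - 1 → b ≠ j₀ → d₂ i₀ b = 0 := by
      intro b h1 h2
      have hbi : b ≠ i₀ := by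
        intro h
        rw [h] at h1
        omega
      rw [g3 b hbi]
      exact f1 b h2 h1
    have g5 : ∀ l, z i₀ = z l - 1 → d₂ l i₀ = 0 := by
      intro l hl
      have h0 : (d₂ * d₂) l j₀ = 0 := by rw [hdd₂]; simp
      rw [Matrix.mul_apply] at h0
      rw [Finset.sum_eq_single i₀ ?h₁ ?h₂] at h0
      · exact (mul_eq_zero.mp h0).resolve_right hd₂ne
      case h₁ =>
        intro a _ ha
        by_cases h1 : d₂ l a = 0
        · rw [h1]; ring
        by_cases h2 : d₂ a j₀ = 0
        · rw [h2]; ring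
        exfalso
        have c1 := (hsupp₂ l a h1).2.2
        have c2 := (hsupp₂ a j₀ h2).2.2
        exact h2 (g2 a ha (by omega))
      case h₂ =>
        intro h
        exact absurd (Finset.mem_univ i₀) h
    have g6 : ∀ b, z b = z j₀ - 1 → d₂ j₀ b = 0 := by
      intro b hb
      have h0 : (d₂ * d₂) i₀ b = 0 := by rw [hdd₂]; simp
      rw [Matrix.mul_apply] at h0
      rw [Finset.sum_eq_single j₀ ?h₁ ?h₂] at h0
      · exact (mul_eq_zero.mp h0).resolve_left hd₂ne
      case h₁ =>
        intro a _ ha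
        by_cases h1 : d₂ i₀ a = 0
        · rw [h1]; ring
        by_cases h2 : d₂ a b = 0
        · rw [h2]; ring
        exfalso
        have c1 := (hsupp₂ i₀ a h1).2.2
        have c2 := (hsupp₂ a b h2).2.2
        exact h1 (hrowi₀ a (by omega) ha)
      case h₂ =>
        intro h
        exact absurd (Finset.mem_univ j₀) h
    have hIso₂i₀ : Iso z d₂ i₀ := by
      have hrow : rowH z d₂ i₀ = {j₀} := by
        ext x
        rw [mem_rowH, Finset.mem_singleton]
        constructor
        · rintro ⟨h1, h2⟩
          by_contra hx
          exact h1 (hrowi₀ x h2 hx)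
        · rintro rfl
          exact ⟨hd₂ne, hz₀⟩
      have hcol : colH z d₂ i₀ = ∅ := by
        rw [Finset.eq_empty_iff_forall_notMem]
        intro x hx
        rw [mem_colH] at hx
        exact hx.1 (g5 x hx.2)
      unfold Iso
      rw [hrow, hcol]
      simp
    have hIso₂j₀ : Iso z d₂ j₀ := by
      have hrow : rowH z d₂ j₀ = ∅ := by
        rw [Finset.eq_empty_iff_forall_notMem]
        intro x hx
        rw [mem_rowH] at hx
        exact hx.1 (g6 x hx.2)
      have hcol : colH z d₂ j₀ = {i₀} := by
        ext x
        rw [mem_colH, Finset.mem_singleton]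
        constructor
        · rintro ⟨h1, h2⟩
          by_contra hx
          exact h1 (g2 x hx (by omega))
        · rintro rfl
          exact ⟨hd₂ne, hz₀⟩
      unfold Iso
      rw [hrow, hcol]
      simp
    have hpres : ∀ a b, z b = z a - 1 → (a ∉ S ∨ b ∉ S) → d₂ a b = d a b := by
      intro a b h1 h2
      rw [g4 a b h1 h2, f3 a b h1 h2]
    have hiso_tr : ∀ k, k ∉ S → Iso z d k → Iso z d₂ k := by
      intro k hk hIso
      have hrow : rowH z d₂ k = rowH z d k := by
        ext x
        simp only [mem_rowH]
        by_cases hzx : z x = z k - 1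
        · rw [hpres k x hzx (Or.inl hk)]
        · simp [hzx]
      have hcol : colH z d₂ k = colH z d k := by
        ext x
        simp only [mem_colH]
        by_cases hzx : z k = z x - 1
        · rw [hpres x k hzx (Or.inr hk)]
        · simp [hzx]
      unfold Iso at hIso ⊢
      rw [hrow, hcol]
      exact hIso
    set S' : Finset (Fin m) := (S.erase i₀).erase j₀ with hS'_def
    have hmemS' : ∀ x, x ∈ S' ↔ x ∈ S ∧ x ≠ i₀ ∧ x ≠ j₀ := by
      intro x
      rw [hS'_def]
      simp only [Finset.mem_erase]
      tauto
    have hInv' : Inv z S' d₂ := by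
      intro i j hdij hzij hout
      by_cases hii : i = i₀
      · subst hii
        have hj : j = j₀ := by
          by_contra hj
          exact hdij (hrowi₀ j hzij hj)
        subst hj
        refine ⟨⟨?_, ?_⟩, hIso₂i₀, hIso₂j₀⟩
        · rw [hmemS']; tauto
        · rw [hmemS']; tauto
      by_cases hij' : i = j₀
      · subst hij'
        exact absurd (g6 j hzij) hdij
      by_cases hji : j = i₀
      · subst hji
        exact absurd (g5 i hzij) hdij
      by_cases hjj : j = j₀
      · subst hjj
        exact absurd (g2 i hii (by omega)) hdij
      have houtS : i ∉ S ∨ j ∉ S := by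
        rcases hout with h | h
        · left
          intro hiS
          exact h ((hmemS' i).mpr ⟨hiS, hii, hij'⟩)
        · right
          intro hjS
          exact h ((hmemS' j).mpr ⟨hjS, hji, hjj⟩)
      have hde : d₂ i j = d i j := hpres i j hzij houtS
      have hold := hinv i j (by rw [← hde]; exact hdij) hzij houtS
      refine ⟨⟨?_, ?_⟩, hiso_tr i hold.1.1 hold.2.1, hiso_tr j hold.1.2 hold.2.2⟩
      · intro h
        exact hold.1.1 ((hmemS' i).mp h).1
      · intro h
        exact hold.1.2 ((hmemS' j).mp h).1
    have hcard' : S'.card ≤ n := by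
      have h1 : (S.erase i₀).card = S.card - 1 := Finset.card_erase_of_mem hi₀S
      have h2 : S'.card ≤ (S.erase i₀).card := by
        rw [hS'_def]
        exact Finset.card_erase_le
      have h3 : 1 ≤ S.card := Finset.card_pos.mpr ⟨i₀, hi₀S⟩
      omega
    obtain ⟨P', Q', hP', hQ', hPQ', hQP', hHS'⟩ := ih S' d₂ hcard' hdd₂ hsupp₂ hInv'
    refine ⟨P' * ((1 + cM i₀ v) * (1 + rN j₀ u)),
      ((1 - rN j₀ u) * (1 - cM i₀ v)) * Q', ?_, ?_, ?_, ?_, ?_⟩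
    · exact filt_mul w z hP' (filt_mul w z hfM₁ hfN₁)
    · exact filt_mul w z (filt_mul w z hfN₂ hfM₂) hQ'
    · calc (P' * ((1 + cM i₀ v) * (1 + rN j₀ u))) * (((1 - rN j₀ u) * (1 - cM i₀ v)) * Q')
          = P' * ((1 + cM i₀ v) * ((1 + rN j₀ u) * (1 - rN j₀ u)) * (1 - cM i₀ v) * Q') := by
            noncomm_ring
      _ = 1 := by
            rw [rN_inv₁ j₀ u hur, Matrix.mul_one, cM_inv₁ i₀ v hvc, one_mul, hPQ']
    · calc (((1 - rN j₀ u) * (1 - cM i₀ v)) * Q') * (P' * ((1 + cM i₀ v) * (1 + rN j₀ u)))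
          = (1 - rN j₀ u) * ((1 - cM i₀ v) * (Q' * P') * (1 + cM i₀ v)) * (1 + rN j₀ u) := by
            noncomm_ring
      _ = 1 := by
            rw [hQP', Matrix.mul_one, cM_inv₂ i₀ v hvc, Matrix.mul_one, rN_inv₂ j₀ u hur]
    · have heq : (P' * ((1 + cM i₀ v) * (1 + rN j₀ u))) * d
          * (((1 - rN j₀ u) * (1 - cM i₀ v)) * Q') = P' * d₂ * Q' := by
        rw [hd₂_def, hd₁_def]
        noncomm_ring
      rw [heq]
      exact hHS'

end HSimp


/-- Every reduced matrix-model bigraded complex over a field `F` is isomorphic, via a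
homogeneous change of basis, to a matrix-model bigraded complex over `F` that is
horizontally simplified. -/
theorem exists_horizontallySimplified_isomorphic (F : Type) [Field F] (m : ℕ)
    (C : BigradedComplex F m) (hC : C.Reduced) :
    ∃ (m' : ℕ) (C' : BigradedComplex F m'),
      C'.HorizontallySimplified ∧ C.Isomorphic C' := by
  classical
  obtain ⟨P, Q, hP, hQ, hPQ, hQP, hHS⟩ :=
    HSimp.key C.grw C.grz C.parity (Finset.univ : Finset (Fin m)).card Finset.univ C.d
      le_rfl C.d_sq C.d_supp
      (by
        intro i j _ _ hout
        rcases hout with h | h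
        · exact absurd (Finset.mem_univ i) h
        · exact absurd (Finset.mem_univ j) h)
  refine ⟨m, ⟨C.grw, C.grz, C.parity, P * C.d * Q,
    HSimp.conj_sq_zero hQP C.d_sq,
    HSimp.hsupp_conj C.grw C.grz hP hQ C.d_supp⟩, ?_, ?_⟩
  · exact hHS
  · refine ⟨Q, P, ⟨?_, ?_⟩, ⟨?_, ?_⟩, hQP, hPQ⟩
    · intro i j hij
      obtain ⟨hz, he, hw⟩ := hQ i j hij
      dsimp only
      exact ⟨he, by omega, by rw [hz]; simp, by omega⟩
    · show C.d * Q = Q * (P * C.d * Q)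
      calc C.d * Q = (Q * P) * (C.d * Q) := by rw [hQP, one_mul]
      _ = Q * (P * C.d * Q) := by noncomm_ring
    · intro i j hij
      obtain ⟨hz, he, hw⟩ := hP i j hij
      dsimp only
      exact ⟨he, by omega, by rw [hz]; simp, by omega⟩
    · show (P * C.d * Q) * P = P * C.d
      calc (P * C.d * Q) * P = P * C.d * (Q * P) := by noncomm_ring
      _ = P * C.d := by rw [hQP, Matrix.mul_one]
end

section
/- Let 𝔽 be a field and let C₁ = (m, gr, d₁) and C₂ = (n, gr′, d₂) be matrix-model bigraded complexes over 𝔽. Suppose 2k ≤ m and the horizontal arrows of d₁ are exactly the entries d₁(2i−1, 2i) for 1 ≤ i ≤ k; that is, for each 1 ≤ i ≤ k one has d₁(2i−1, 2i) ≠ 0 with gr_z(2i) = gr_z(2i−1) − 1, and every other nonzero entry d₁(s,t) satisfies gr_z(t) ≠ gr_z(s) − 1. Then every flip-filtered chain map Ψ of skew degree (0,0) from C₁ to C₂ is flip-filtered chain homotopic to a flip-filtered chain map Ψ′ of skew degree (0,0) such that for every 1 ≤ i ≤ k, every entry of row 2i−1 of Ψ′ is zero, and every entry of row 2i of Ψ′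 involves only monomials with U-exponent at least 1 (equivalently, its scalar coefficient ψ′(2i,j) vanishes unless gr′_w(j) − gr_z(2i) ≥ 2). -/
/-- The ring `R∞ = F[U, U⁻¹, V, V⁻¹]` of Laurent polynomials in two variables over `F`,
realized as the monoid algebra of `ℤ × ℤ` over `F`; a pair `(a, b) : ℤ × ℤ` records the
exponents of `U` and `V`. -/
abbrev LaurentTwo (F : Type) [Field F] : Type := AddMonoidAlgebra F (ℤ × ℤ)

namespace BigradedComplex

variable {F : Type} [Field F] {m n : ℕ}

/-- The monomial `c • U^a • V^b` of `R∞`. -/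
noncomputable def mon (a b : ℤ) (c : F) : LaurentTwo F := AddMonoidAlgebra.ofCoeff (Finsupp.single (a, b) c)

/-- The `F`-algebra automorphism `σ` of `R∞` interchanging `U` and `V`, as a function. -/
noncomputable def flipUV (x : LaurentTwo F) : LaurentTwo F :=
  AddMonoidAlgebra.ofCoeff (Finsupp.equivMapDomain (Equiv.prodComm ℤ ℤ) x.coeff)

/-- `x ∈ R∞` involves only monomials with nonnegative `U`-exponent. -/
def UNonneg (x : LaurentTwo F) : Prop :=
  ∀ p ∈ (x.coeff : (ℤ × ℤ) →₀ F).support, (0 : ℤ) ≤ p.1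

/-- The differential matrix of a matrix-model complex, as a matrix over `R∞`:
`D i j = d i j • U^((grw j - grw i + 1)/2) • V^((grz j - grz i + 1)/2)`. -/
noncomputable def diffMatrix (C : BigradedComplex F m) :
    Matrix (Fin m) (Fin m) (LaurentTwo F) :=
  Matrix.of fun i j =>
    mon ((C.grw j - C.grw i + 1) / 2) ((C.grz j - C.grz i + 1) / 2) (C.d i j)

/-- The differential matrix with `U` and `V` interchanged, i.e. `σ(D)` entrywise. -/
noncomputable def flipDiffMatrix (C : BigradedComplex F m) :
    Matrix (Fin m) (Fin m) (LaurentTwo F) :=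
  Matrix.of fun i j => flipUV (C.diffMatrix i j)

/-- The matrix over `R∞` of the skew-degree-`(0,0)` flip map with scalar coefficients `ψ`:
`Ψ i j = ψ i j • U^((grw' j - grz i)/2) • V^((grz' j - grw i)/2)`. -/
noncomputable def flipMapMatrix (C₁ : BigradedComplex F m) (C₂ : BigradedComplex F n)
    (ψ : Matrix (Fin m) (Fin n) F) : Matrix (Fin m) (Fin n) (LaurentTwo F) :=
  Matrix.of fun i j =>
    mon ((C₂.grw j - C₁.grz i) / 2) ((C₂.grz j - C₁.grw i) / 2) (ψ i j)

/-- `ψ` is the scalar coefficient matrix of a flip-filtered chain map of skew degree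
`(0,0)` from `C₁` to `C₂`: the scalar `ψ i j` vanishes unless `grw' j - grz i` is even and
nonnegative, and the associated matrix `Ψ` over `R∞` satisfies `σ(D₁) · Ψ = Ψ · D₂`. -/
def IsFlipChainMap (C₁ : BigradedComplex F m) (C₂ : BigradedComplex F n)
    (ψ : Matrix (Fin m) (Fin n) F) : Prop :=
  (∀ i j, ψ i j ≠ 0 → Even (C₂.grw j - C₁.grz i) ∧ 0 ≤ C₂.grw j - C₁.grz i) ∧
  C₁.flipDiffMatrix * flipMapMatrix C₁ C₂ ψ = flipMapMatrix C₁ C₂ ψ * C₂.diffMatrix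

/-- Two flip-filtered chain maps (with scalar coefficient matrices `ψ` and `ψ'`) are
flip-filtered chain homotopic: there is a matrix `H` over `R∞`, each entry of which
involves only monomials with nonnegative `U`-exponent, with
`Ψ - Ψ' = σ(D₁) · H + H · D₂`. -/
def FlipHomotopic (C₁ : BigradedComplex F m) (C₂ : BigradedComplex F n)
    (ψ ψ' : Matrix (Fin m) (Fin n) F) : Prop :=
  ∃ H : Matrix (Fin m) (Fin n) (LaurentTwo F),
    (∀ i j, UNonneg (H i j)) ∧
    flipMapMatrix C₁ C₂ ψ - flipMapMatrix C₁ C₂ ψ' =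
      C₁.flipDiffMatrix * H + H * C₂.diffMatrix




end BigradedComplex

namespace BigradedComplex

variable {F : Type} [Field F] {m n p : ℕ}

lemma mon_mul (a b a' b' : ℤ) (x y : F) :
    mon a b x * mon a' b' y = mon (a + a') (b + b') (x * y) := by
  show AddMonoidAlgebra.single (a, b) x * AddMonoidAlgebra.single (a', b') y =
    AddMonoidAlgebra.single (a + a', b + b') (x * y)
  rw [AddMonoidAlgebra.single_mul_single]
  rfl

lemma mon_zero (a b : ℤ) : mon a b (0 : F) = 0 := AddMonoidAlgebra.single_zero _

lemma mon_sum {ι : Type*} (s : Finset ι) (a b : ℤ) (f : ι → F) :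
    mon a b (∑ i ∈ s, f i) = ∑ i ∈ s, mon a b (f i) :=
  map_sum (AddMonoidAlgebra.singleAddHom (a, b)) f s

/-- A matrix of monomials with prescribed exponents and scalar coefficients. -/
noncomputable def monMatrix (e1 e2 : Fin m → Fin n → ℤ) (c : Matrix (Fin m) (Fin n) F) :
    Matrix (Fin m) (Fin n) (LaurentTwo F) :=
  Matrix.of fun i j => mon (e1 i j) (e2 i j) (c i j)

lemma monMatrix_apply (e1 e2 : Fin m → Fin n → ℤ) (c : Matrix (Fin m) (Fin n) F)
    (i : Fin m) (j : Fin n) : monMatrix e1 e2 c i j = mon (e1 i j) (e2 i j) (c i j) := rfl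

lemma monMatrix_inj (e1 e2 : Fin m → Fin n → ℤ) {c c' : Matrix (Fin m) (Fin n) F}
    (h : monMatrix e1 e2 c = monMatrix e1 e2 c') : c = c' := by
  ext i j
  have := congrArg AddMonoidAlgebra.coeff (congrFun (congrFun h i) j)
  exact Finsupp.single_injective _ this

lemma monMatrix_zero (e1 e2 : Fin m → Fin n → ℤ) :
    monMatrix e1 e2 (0 : Matrix (Fin m) (Fin n) F) = 0 := by
  refine Matrix.ext fun i j => ?_
  simp [monMatrix, mon]

lemma monMatrix_add (e1 e2 : Fin m → Fin n → ℤ) (c c' : Matrix (Fin m) (Fin n) F) :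
    monMatrix e1 e2 (c + c') = monMatrix e1 e2 c + monMatrix e1 e2 c' := by
  refine Matrix.ext fun i j => ?_
  simp only [monMatrix, Matrix.of_apply, Matrix.add_apply, mon]
  rw [Finsupp.single_add]
  rfl

lemma monMatrix_sub (e1 e2 : Fin m → Fin n → ℤ) (c c' : Matrix (Fin m) (Fin n) F) :
    monMatrix e1 e2 (c - c') = monMatrix e1 e2 c - monMatrix e1 e2 c' := by
  refine Matrix.ext fun i j => ?_
  simp only [monMatrix, Matrix.of_apply, Matrix.sub_apply, mon]
  rw [Finsupp.single_sub]
  rfl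

lemma monMatrix_mul (e1 e2 : Fin m → Fin p → ℤ) (g1 g2 : Fin p → Fin n → ℤ)
    (f1 f2 : Fin m → Fin n → ℤ) (c : Matrix (Fin m) (Fin p) F)
    (c' : Matrix (Fin p) (Fin n) F)
    (hcomp : ∀ i s j, c i s ≠ 0 → c' s j ≠ 0 →
      e1 i s + g1 s j = f1 i j ∧ e2 i s + g2 s j = f2 i j) :
    monMatrix e1 e2 c * monMatrix g1 g2 c' = monMatrix f1 f2 (c * c') := by
  refine Matrix.ext fun i j => ?_
  simp only [Matrix.mul_apply, monMatrix_apply]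
  rw [mon_sum]
  refine Finset.sum_congr rfl fun s _ => ?_
  rw [mon_mul]
  by_cases h1 : c i s = 0
  · rw [h1, zero_mul, mon_zero, mon_zero]
  by_cases h2 : c' s j = 0
  · rw [h2, mul_zero, mon_zero, mon_zero]
  obtain ⟨hA, hB⟩ := hcomp i s j h1 h2
  rw [hA, hB]

lemma diffMatrix_eq (C : BigradedComplex F m) :
    C.diffMatrix = monMatrix (fun i j => (C.grw j - C.grw i + 1) / 2)
      (fun i j => (C.grz j - C.grz i + 1) / 2) C.d := rfl

lemma flipMapMatrix_eq (C₁ : BigradedComplex F m) (C₂ : BigradedComplex F n)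
    (ψ : Matrix (Fin m) (Fin n) F) :
    flipMapMatrix C₁ C₂ ψ = monMatrix (fun i j => (C₂.grw j - C₁.grz i) / 2)
      (fun i j => (C₂.grz j - C₁.grw i) / 2) ψ := rfl

lemma flipDiffMatrix_eq (C : BigradedComplex F m) :
    C.flipDiffMatrix = monMatrix (fun i j => (C.grz j - C.grz i + 1) / 2)
      (fun i j => (C.grw j - C.grw i + 1) / 2) C.d := by
  refine Matrix.ext fun i j => ?_
  simp [flipDiffMatrix, diffMatrix, monMatrix, flipUV, mon,
    Finsupp.equivMapDomain_single, AddMonoidAlgebra.coeff_ofCoeff]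


lemma d_supp' (C : BigradedComplex F m) {i j : Fin m} (h : C.d i j ≠ 0) :
    (C.grw j - C.grw i) % 2 = 1 ∧ -1 ≤ C.grw j - C.grw i ∧ -1 ≤ C.grz j - C.grz i ∧
      (C.grz j - C.grz i) % 2 = 1 := by
  obtain ⟨ho, h1, h2⟩ := C.d_supp i j h
  have p1 := C.parity i
  have p2 := C.parity j
  rw [Int.odd_iff] at ho
  omega

lemma diffMatrix_sq (C : BigradedComplex F m) : C.diffMatrix * C.diffMatrix = 0 := by
  rw [diffMatrix_eq,
    monMatrix_mul _ _ _ _ (fun i j => (C.grw j - C.grw i + 2) / 2)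
      (fun i j => (C.grz j - C.grz i + 2) / 2) C.d C.d ?_, C.d_sq, monMatrix_zero]
  intro i s j h1 h2
  have a1 := C.d_supp' h1
  have a2 := C.d_supp' h2
  beta_reduce
  omega

lemma flipDiffMatrix_sq (C : BigradedComplex F m) :
    C.flipDiffMatrix * C.flipDiffMatrix = 0 := by
  rw [flipDiffMatrix_eq,
    monMatrix_mul _ _ _ _ (fun i j => (C.grz j - C.grz i + 2) / 2)
      (fun i j => (C.grw j - C.grw i + 2) / 2) C.d C.d ?_, C.d_sq, monMatrix_zero]
  intro i s j h1 h2
  have a1 := C.d_supp' h1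
  have a2 := C.d_supp' h2
  beta_reduce
  omega

lemma flipDiff_mul_flipMap (C₁ : BigradedComplex F m) (C₂ : BigradedComplex F n)
    (χ : Matrix (Fin m) (Fin n) F)
    (hχ : ∀ i j, χ i j ≠ 0 → 0 ≤ C₂.grw j - C₁.grz i ∧ (C₂.grw j - C₁.grz i) % 2 = 0) :
    C₁.flipDiffMatrix * flipMapMatrix C₁ C₂ χ =
      monMatrix (fun i j => (C₂.grw j - C₁.grz i + 1) / 2)
        (fun i j => (C₂.grz j - C₁.grw i + 1) / 2) (C₁.d * χ) := by
  rw [flipDiffMatrix_eq, flipMapMatrix_eq]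
  refine monMatrix_mul _ _ _ _ _ _ _ _ ?_
  intro i s j h1 h2
  have a1 := C₁.d_supp' h1
  have a2 := hχ s j h2
  have p1 := C₁.parity i
  have p2 := C₁.parity s
  have p3 := C₂.parity j
  omega

lemma flipMap_mul_diff (C₁ : BigradedComplex F m) (C₂ : BigradedComplex F n)
    (χ : Matrix (Fin m) (Fin n) F)
    (hχ : ∀ i j, χ i j ≠ 0 → 0 ≤ C₂.grw j - C₁.grz i ∧ (C₂.grw j - C₁.grz i) % 2 = 0) :
    flipMapMatrix C₁ C₂ χ * C₂.diffMatrix =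
      monMatrix (fun i j => (C₂.grw j - C₁.grz i + 1) / 2)
        (fun i j => (C₂.grz j - C₁.grw i + 1) / 2) (χ * C₂.d) := by
  rw [flipMapMatrix_eq, diffMatrix_eq]
  refine monMatrix_mul _ _ _ _ _ _ _ _ ?_
  intro i s j h1 h2
  have a1 := hχ i s h1
  have a2 := C₂.d_supp' h2
  have p1 := C₁.parity i
  have p2 := C₂.parity s
  have p3 := C₂.parity j
  omega

/-- The homotopy matrix associated to a scalar matrix `hc`. -/
noncomputable def Hmat (C₁ : BigradedComplex F m) (C₂ : BigradedComplex F n)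
    (hc : Matrix (Fin m) (Fin n) F) : Matrix (Fin m) (Fin n) (LaurentTwo F) :=
  monMatrix (fun i j => (C₂.grw j - C₁.grz i - 1) / 2)
    (fun i j => (C₂.grz j - C₁.grw i - 1) / 2) hc

lemma flipDiff_mul_Hmat (C₁ : BigradedComplex F m) (C₂ : BigradedComplex F n)
    (hc : Matrix (Fin m) (Fin n) F)
    (hhc : ∀ i j, hc i j ≠ 0 → 1 ≤ C₂.grw j - C₁.grz i ∧ (C₂.grw j - C₁.grz i) % 2 = 1) :
    C₁.flipDiffMatrix * Hmat C₁ C₂ hc = flipMapMatrix C₁ C₂ (C₁.d * hc) := by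
  rw [flipDiffMatrix_eq, Hmat, flipMapMatrix_eq]
  refine monMatrix_mul _ _ _ _ _ _ _ _ ?_
  intro i s j h1 h2
  have a1 := C₁.d_supp' h1
  have a2 := hhc s j h2
  have p1 := C₁.parity i
  have p2 := C₁.parity s
  have p3 := C₂.parity j
  omega

lemma Hmat_mul_diff (C₁ : BigradedComplex F m) (C₂ : BigradedComplex F n)
    (hc : Matrix (Fin m) (Fin n) F)
    (hhc : ∀ i j, hc i j ≠ 0 → 1 ≤ C₂.grw j - C₁.grz i ∧ (C₂.grw j - C₁.grz i) % 2 = 1) :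
    Hmat C₁ C₂ hc * C₂.diffMatrix = flipMapMatrix C₁ C₂ (hc * C₂.d) := by
  rw [Hmat, flipMapMatrix_eq, diffMatrix_eq]
  refine monMatrix_mul _ _ _ _ _ _ _ _ ?_
  intro i s j h1 h2
  have a1 := hhc i s h1
  have a2 := C₂.d_supp' h2
  have p1 := C₁.parity i
  have p2 := C₂.parity s
  have p3 := C₂.parity j
  omega

lemma Hmat_UNonneg (C₁ : BigradedComplex F m) (C₂ : BigradedComplex F n)
    (hc : Matrix (Fin m) (Fin n) F)
    (hhc : ∀ i j, hc i j ≠ 0 → 1 ≤ C₂.grw j - C₁.grz i ∧ (C₂.grw j - C₁.grz i) % 2 = 1) :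
    ∀ i j, UNonneg (Hmat C₁ C₂ hc i j) := by
  intro i j p hp
  by_cases h : hc i j = 0
  · rw [Hmat, monMatrix_apply, h, mon_zero] at hp
    simp at hp
  · rw [Hmat, monMatrix_apply, mon] at hp
    have := Finsupp.support_single_subset hp
    rw [Finset.mem_singleton] at this
    subst this
    have := hhc i j h
    simp only
    omega

end BigradedComplex

namespace BigradedComplexAux

variable {F : Type} [Field F]

/-- geometric series inverse -/
lemma one_sub_mul_geom {A : Type*} [Ring A] (x : A) (R : ℕ) :
    (1 - x) * ∑ r ∈ Finset.range R, x ^ r = 1 - x ^ R := by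
  induction R with
  | zero => simp
  | succ R ih =>
      rw [Finset.sum_range_succ, mul_add, ih, pow_succ', sub_mul, one_mul]
      abel

/-- Inverse of a matrix which is triangular with respect to an integer weight `g`,
with support control on the inverse. -/
lemma exists_inverse_of_triangular {k : ℕ} (g : Fin k → ℤ) (T : Matrix (Fin k) (Fin k) F)
    (hdiag : ∀ i, T i i ≠ 0)
    (hoff : ∀ i i', i ≠ i' → T i i' ≠ 0 → 2 ≤ g i' - g i ∧ (g i' - g i) % 2 = 0) :
    ∃ Tinv : Matrix (Fin k) (Fin k) F, T * Tinv = 1 ∧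
      ∀ i i', Tinv i i' ≠ 0 → 0 ≤ g i' - g i ∧ (g i' - g i) % 2 = 0 := by
  rcases Nat.eq_zero_or_pos k with hk | hk
  · subst hk
    exact ⟨1, Subsingleton.elim _ _, fun i => i.elim0⟩
  have : NeZero k := ⟨hk.ne'⟩
  set dg : Fin k → F := fun i => T i i with hdg
  have hdgne : ∀ i, dg i ≠ 0 := hdiag
  set M : Matrix (Fin k) (Fin k) F :=
    Matrix.of (fun i i' => (dg i)⁻¹ * (T - Matrix.diagonal dg) i i') with hM
  have hMsupp : ∀ i i', M i i' ≠ 0 → 2 ≤ g i' - g i ∧ (g i' - g i) % 2 = 0 := by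
    intro i i' hne
    have h1 : (T - Matrix.diagonal dg) i i' ≠ 0 := by
      intro h
      apply hne
      simp only [hM, Matrix.of_apply, h, mul_zero]
    have hii : i ≠ i' := by
      rintro rfl
      simp [Matrix.sub_apply, Matrix.diagonal_apply_eq, hdg] at h1
    have hT : T i i' ≠ 0 := by
      intro h
      apply h1
      simp only [Matrix.sub_apply, Matrix.diagonal_apply_ne _ hii, h, sub_zero]
    exact hoff i i' hii hT
  have hMpow : ∀ r : ℕ, ∀ i i', (M ^ r) i i' ≠ 0 →
      2 * (r : ℤ) ≤ g i' - g i ∧ (g i' - g i) % 2 = 0 := by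
    intro r
    induction r with
    | zero =>
        intro i i' hne
        rw [pow_zero] at hne
        have : i = i' := by
          by_contra h
          exact hne (Matrix.one_apply_ne h)
        subst this
        simp
    | succ r ih =>
        intro i i' hne
        rw [pow_succ, Matrix.mul_apply] at hne
        obtain ⟨s, _, hs⟩ := Finset.exists_ne_zero_of_sum_ne_zero hne
        have h1 := ih i s (left_ne_zero_of_mul hs)
        have h2 := hMsupp s i' (right_ne_zero_of_mul hs)
        push_cast
        omega
  -- nilpotency bound
  have hne : (Finset.univ.image g).Nonempty := by
    refine Finset.image_nonempty.2 Finset.univ_nonempty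
  set R : ℕ := ((Finset.univ.image g).max' hne - (Finset.univ.image g).min' hne).toNat + 1
    with hR
  have hMR : M ^ R = 0 := by
    ext i i'
    rw [Matrix.zero_apply]
    by_contra hne'
    have h1 := hMpow R i i' hne'
    have h2 : g i' ≤ (Finset.univ.image g).max' hne :=
      Finset.le_max' _ _ (Finset.mem_image_of_mem g (Finset.mem_univ i'))
    have h3 : (Finset.univ.image g).min' hne ≤ g i :=
      Finset.min'_le _ _ (Finset.mem_image_of_mem g (Finset.mem_univ i))
    omega
  have hTfac : T = Matrix.diagonal dg * (1 + M) := by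
    ext i i'
    rw [Matrix.diagonal_mul]
    by_cases h : i = i'
    · subst h
      simp [hM, Matrix.add_apply, Matrix.sub_apply, Matrix.one_apply_eq,
        Matrix.diagonal_apply_eq, mul_add, hdg]
    · simp only [Matrix.add_apply, Matrix.one_apply_ne h, hM, Matrix.of_apply,
        Matrix.sub_apply, Matrix.diagonal_apply_ne _ h, zero_add, sub_zero]
      rw [← mul_assoc, mul_inv_cancel₀ (hdgne i), one_mul]
  set geo : Matrix (Fin k) (Fin k) F := ∑ r ∈ Finset.range R, (-M) ^ r with hgeo
  have hgeoinv : (1 + M) * geo = 1 := by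
    have := one_sub_mul_geom (-M) R
    rw [sub_neg_eq_add] at this
    rw [hgeo, this, neg_pow, hMR, mul_zero, sub_zero]
  refine ⟨geo * Matrix.diagonal (fun i => (dg i)⁻¹), ?_, ?_⟩
  · rw [hTfac, Matrix.mul_assoc, ← Matrix.mul_assoc (1 + M), hgeoinv, Matrix.one_mul,
      Matrix.diagonal_mul_diagonal,
      show (fun i => dg i * (dg i)⁻¹) = fun _ => (1 : F) from
        funext fun i => mul_inv_cancel₀ (hdgne i),
      Matrix.diagonal_one]
  · intro i i' hne'
    rw [Matrix.mul_diagonal] at hne'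
    have hg : geo i i' ≠ 0 := left_ne_zero_of_mul hne'
    rw [hgeo, Matrix.sum_apply] at hg
    obtain ⟨r, _, hr⟩ := Finset.exists_ne_zero_of_sum_ne_zero hg
    have heq : ((-M) ^ r) i i' = (-1 : F) ^ r • (M ^ r) i i' := by
      rw [show -M = (-1 : F) • M from (neg_one_smul F M).symm, smul_pow, Matrix.smul_apply]
    rw [heq] at hr
    have hMr : (M ^ r) i i' ≠ 0 := by
      intro h; rw [h, smul_zero] at hr; exact hr rfl
    have := hMpow r i i' hMr
    omega

end BigradedComplexAux

open BigradedComplex in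
/-- Suppose `2k ≤ m` and the horizontal arrows of the reduced-type complex `C₁` are
exactly the entries `d₁ (a i) (b i)` for `i = 0, …, k-1`, where `a i, b i` are the indices
`2i, 2i+1` (the 1-based pairs `(2i-1, 2i)`).  Then every flip-filtered chain map `Ψ` of
skew degree `(0,0)` from `C₁` to `C₂` is flip-filtered chain homotopic to one `Ψ'` whose
rows `a i` vanish and whose rows `b i` involve only monomials with `U`-exponent at least
`1`, i.e. whose scalar coefficient `ψ' (b i) j` vanishes unless `grw' j - grz (b i) ≥ 2`. -/
theorem flipChainMap_homotopic_vanishing_on_horizontal_arrows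
    (F : Type) [Field F] (m n k : ℕ) (hk : 2 * k ≤ m)
    (C₁ : BigradedComplex F m) (C₂ : BigradedComplex F n)
    (a b : Fin k → Fin m)
    (ha : ∀ i : Fin k, (a i : ℕ) = 2 * (i : ℕ))
    (hb : ∀ i : Fin k, (b i : ℕ) = 2 * (i : ℕ) + 1)
    (harrow : ∀ i : Fin k, C₁.d (a i) (b i) ≠ 0 ∧ C₁.grz (b i) = C₁.grz (a i) - 1)
    (honly : ∀ s t : Fin m, C₁.d s t ≠ 0 → C₁.grz t = C₁.grz s - 1 →
      ∃ i : Fin k, s = a i ∧ t = b i)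
    (ψ : Matrix (Fin m) (Fin n) F) (hψ : IsFlipChainMap C₁ C₂ ψ) :
    ∃ ψ' : Matrix (Fin m) (Fin n) F,
      IsFlipChainMap C₁ C₂ ψ' ∧ FlipHomotopic C₁ C₂ ψ ψ' ∧
      (∀ (i : Fin k) (j : Fin n), ψ' (a i) j = 0) ∧
      (∀ (i : Fin k) (j : Fin n), ψ' (b i) j ≠ 0 → 2 ≤ C₂.grw j - C₁.grz (b i)) := by
  classical
  rcases Nat.eq_zero_or_pos k with hk0 | hk0
  · subst hk0
    refine ⟨ψ, hψ, ⟨0, ?_, ?_⟩, fun i => i.elim0, fun i => i.elim0⟩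
    · intro i j p hp
      simp [Matrix.zero_apply] at hp
    · simp
  -- basic index facts
  have ainj : Function.Injective a := by
    intro i i' h
    have h1 := ha i
    have h2 := ha i'
    have h3 := congrArg Fin.val h
    exact Fin.ext (by omega)
  have binj : Function.Injective b := by
    intro i i' h
    have h1 := hb i
    have h2 := hb i'
    have h3 := congrArg Fin.val h
    exact Fin.ext (by omega)
  have abne : ∀ i i' : Fin k, a i ≠ b i' := by
    intro i i' h
    have h1 := ha i
    have h2 := hb i'
    have h3 := congrArg Fin.val h
    omega
  -- arrows out of `a i` other than the horizontal one strictly increase `grz`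
  have nonhoriz : ∀ (i : Fin k) (s : Fin m), C₁.d (a i) s ≠ 0 → s ≠ b i →
      1 ≤ C₁.grz s - C₁.grz (a i) := by
    intro i s hd hs
    obtain ⟨-, -, h2, hodd⟩ := C₁.d_supp' hd
    by_cases hh : C₁.grz s = C₁.grz (a i) - 1
    · obtain ⟨i', hai, hbi⟩ := honly _ _ hd hh
      exact absurd (hbi.trans (congrArg b (ainj hai.symm))) hs
    · omega
  -- the triangular matrix of horizontal-level coefficients
  set T : Matrix (Fin k) (Fin k) F := Matrix.of fun i i' => C₁.d (a i) (b i') with hT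
  obtain ⟨Tinv, hTTinv, hTinvsupp⟩ :=
    BigradedComplexAux.exists_inverse_of_triangular (fun i => C₁.grz (a i)) T
      (fun i => (harrow i).1)
      (by
        intro i i' hii hne
        have hd : C₁.d (a i) (b i') ≠ 0 := hne
        have h1 := nonhoriz i (b i') hd (fun h => hii (binj h).symm)
        have h2 := (C₁.d_supp' hd).2.2.2
        have h3 := (harrow i').2
        show 2 ≤ C₁.grz (a i') - C₁.grz (a i) ∧ (C₁.grz (a i') - C₁.grz (a i)) % 2 = 0
        omega)
  set hmx : Matrix (Fin k) (Fin n) F := Tinv * Matrix.of (fun i j => ψ (a i) j) with hhmx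
  have hψs : ∀ (i0 : Fin m) (j : Fin n), ψ i0 j ≠ 0 →
      0 ≤ C₂.grw j - C₁.grz i0 ∧ (C₂.grw j - C₁.grz i0) % 2 = 0 := by
    intro i0 j hne
    obtain ⟨he, h0⟩ := hψ.1 i0 j hne
    exact ⟨h0, Int.even_iff.1 he⟩
  have hsupp : ∀ (i : Fin k) (j : Fin n), hmx i j ≠ 0 →
      1 ≤ C₂.grw j - C₁.grz (b i) ∧ (C₂.grw j - C₁.grz (b i)) % 2 = 1 := by
    intro i j hne
    rw [hhmx, Matrix.mul_apply] at hne
    obtain ⟨i', -, hi'⟩ := Finset.exists_ne_zero_of_sum_ne_zero hne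
    have h1 : 0 ≤ C₁.grz (a i') - C₁.grz (a i) ∧ (C₁.grz (a i') - C₁.grz (a i)) % 2 = 0 :=
      hTinvsupp i i' (left_ne_zero_of_mul hi')
    have h2 := hψs (a i') j (right_ne_zero_of_mul hi')
    have h3 := (harrow i).2
    omega
  -- the scalar homotopy matrix
  set hc : Matrix (Fin m) (Fin n) F :=
    Matrix.of (fun i0 j => ∑ i, if b i = i0 then hmx i j else 0) with hhc
  have hc_a : ∀ (i : Fin k) (j : Fin n), hc (a i) j = 0 := by
    intro i j
    rw [hhc]
    show (∑ i', if b i' = a i then hmx i' j else 0) = 0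
    exact Finset.sum_eq_zero fun i' _ => if_neg fun h' => abne i i' h'.symm
  have hc_supp : ∀ (i0 : Fin m) (j : Fin n), hc i0 j ≠ 0 →
      1 ≤ C₂.grw j - C₁.grz i0 ∧ (C₂.grw j - C₁.grz i0) % 2 = 1 := by
    intro i0 j hne
    rw [hhc] at hne
    have hne' : (∑ i, if b i = i0 then hmx i j else 0) ≠ 0 := hne
    obtain ⟨i, -, hi⟩ := Finset.exists_ne_zero_of_sum_ne_zero hne'
    by_cases hbi : b i = i0
    · subst hbi
      rw [if_pos rfl] at hi
      exact hsupp i j hi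
    · rw [if_neg hbi] at hi
      exact absurd rfl hi
  set ψ' : Matrix (Fin m) (Fin n) F := ψ - C₁.d * hc - hc * C₂.d with hψ'def
  -- rows `a i` of `ψ'` vanish
  have rowa : ∀ (i : Fin k) (j : Fin n), ψ' (a i) j = 0 := by
    intro i j
    have h1 : (hc * C₂.d) (a i) j = 0 := by
      rw [Matrix.mul_apply]
      exact Finset.sum_eq_zero fun t _ => by rw [hc_a, zero_mul]
    have hTh : T * hmx = Matrix.of fun i j => ψ (a i) j := by
      rw [hhmx, ← Matrix.mul_assoc, hTTinv, Matrix.one_mul]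
    have h2 : (C₁.d * hc) (a i) j = ψ (a i) j := by
      rw [Matrix.mul_apply]
      have hterm : ∀ s : Fin m, C₁.d (a i) s * hc s j
          = ∑ i', if b i' = s then C₁.d (a i) s * hmx i' j else 0 := by
        intro s
        have hcs : hc s j = ∑ i', if b i' = s then hmx i' j else 0 := by rw [hhc, Matrix.of_apply]
        rw [hcs, Finset.mul_sum]
        exact Finset.sum_congr rfl fun i' _ => by rw [mul_ite, mul_zero]
      calc ∑ s, C₁.d (a i) s * hc s j
          = ∑ s, ∑ i', if b i' = s then C₁.d (a i) s * hmx i' j else 0 :=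
            Finset.sum_congr rfl fun s _ => hterm s
        _ = ∑ i', ∑ s, if b i' = s then C₁.d (a i) s * hmx i' j else 0 := Finset.sum_comm
        _ = ∑ i', C₁.d (a i) (b i') * hmx i' j := by
            refine Finset.sum_congr rfl fun i' _ => ?_
            rw [Finset.sum_ite_eq, if_pos (Finset.mem_univ _)]
        _ = (T * hmx) i j := by simp [hT, Matrix.mul_apply]
        _ = ψ (a i) j := by rw [hTh, Matrix.of_apply]
    rw [hψ'def, Matrix.sub_apply, Matrix.sub_apply, h1, h2, sub_self, zero_sub, neg_zero]
  -- support property of `ψ'`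
  have ψ'supp : ∀ (i0 : Fin m) (j : Fin n), ψ' i0 j ≠ 0 →
      0 ≤ C₂.grw j - C₁.grz i0 ∧ (C₂.grw j - C₁.grz i0) % 2 = 0 := by
    intro i0 j hne
    by_cases h1 : ψ i0 j ≠ 0
    · exact hψs i0 j h1
    by_cases h2 : (C₁.d * hc) i0 j ≠ 0
    · rw [Matrix.mul_apply] at h2
      obtain ⟨s, -, hs⟩ := Finset.exists_ne_zero_of_sum_ne_zero h2
      have f1 := C₁.d_supp' (left_ne_zero_of_mul hs)
      have f2 := hc_supp s j (right_ne_zero_of_mul hs)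
      omega
    by_cases h3 : (hc * C₂.d) i0 j ≠ 0
    · rw [Matrix.mul_apply] at h3
      obtain ⟨t, -, ht⟩ := Finset.exists_ne_zero_of_sum_ne_zero h3
      have f1 := hc_supp i0 t (left_ne_zero_of_mul ht)
      have f2 := C₂.d_supp' (right_ne_zero_of_mul ht)
      omega
    · push_neg at h1 h2 h3
      rw [hψ'def, Matrix.sub_apply, Matrix.sub_apply, h1, h2, h3] at hne
      simp at hne
  -- the chain map equation for `ψ'` over `R∞`
  have hΨ'eq : flipMapMatrix C₁ C₂ ψ' = flipMapMatrix C₁ C₂ ψ -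
      (C₁.flipDiffMatrix * Hmat C₁ C₂ hc + Hmat C₁ C₂ hc * C₂.diffMatrix) := by
    rw [flipDiff_mul_Hmat C₁ C₂ hc hc_supp, Hmat_mul_diff C₁ C₂ hc hc_supp]
    simp only [flipMapMatrix_eq]
    rw [← monMatrix_add, ← monMatrix_sub]
    congr 1
    rw [hψ'def]
    abel
  have hchain' : C₁.flipDiffMatrix * flipMapMatrix C₁ C₂ ψ' =
      flipMapMatrix C₁ C₂ ψ' * C₂.diffMatrix := by
    rw [hΨ'eq, Matrix.mul_sub, Matrix.sub_mul, hψ.2, Matrix.mul_add, Matrix.add_mul]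
    have e1 : C₁.flipDiffMatrix * (C₁.flipDiffMatrix * Hmat C₁ C₂ hc) = 0 := by
      rw [← Matrix.mul_assoc, flipDiffMatrix_sq, Matrix.zero_mul]
    have e2 : Hmat C₁ C₂ hc * C₂.diffMatrix * C₂.diffMatrix = 0 := by
      rw [Matrix.mul_assoc, diffMatrix_sq, Matrix.mul_zero]
    rw [e1, e2, ← Matrix.mul_assoc]
    abel
  -- the scalar chain map equation for `ψ'`
  have hscalar : C₁.d * ψ' = ψ' * C₂.d := by
    have h5 := flipDiff_mul_flipMap C₁ C₂ ψ' ψ'supp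
    have h6 := flipMap_mul_diff C₁ C₂ ψ' ψ'supp
    rw [h5, h6] at hchain'
    exact monMatrix_inj _ _ hchain'
  -- rows `b i` of `ψ'` have `U`-exponent at least one
  have rowb : ∀ (i : Fin k) (j : Fin n), ψ' (b i) j ≠ 0 → 2 ≤ C₂.grw j - C₁.grz (b i) := by
    intro i j hne
    have hs := ψ'supp (b i) j hne
    by_contra hlt
    push_neg at hlt
    have heq0 : ∑ s, C₁.d (a i) s * ψ' s j = 0 := by
      have hent : (C₁.d * ψ') (a i) j = (ψ' * C₂.d) (a i) j := by rw [hscalar]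
      rw [Matrix.mul_apply, Matrix.mul_apply] at hent
      rw [hent]
      exact Finset.sum_eq_zero fun t _ => by rw [rowa, zero_mul]
    have hsingle : ∑ s, C₁.d (a i) s * ψ' s j = C₁.d (a i) (b i) * ψ' (b i) j := by
      refine Finset.sum_eq_single_of_mem (b i) (Finset.mem_univ _) ?_
      intro s _ hsne
      by_cases hd : C₁.d (a i) s = 0
      · rw [hd, zero_mul]
      by_cases hp : ψ' s j = 0
      · rw [hp, mul_zero]
      exfalso
      have f1 := nonhoriz i s hd hsne
      have f2 := ψ'supp s j hp
      have f3 := (harrow i).2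
      omega
    rw [hsingle] at heq0
    exact mul_ne_zero (harrow i).1 hne heq0
  refine ⟨ψ', ⟨?_, hchain'⟩, ⟨Hmat C₁ C₂ hc, Hmat_UNonneg C₁ C₂ hc hc_supp, ?_⟩, rowa, rowb⟩
  · intro i0 j hne
    have hp := ψ'supp i0 j hne
    exact ⟨Int.even_iff.2 hp.2, hp.1⟩
  · rw [flipDiff_mul_Hmat C₁ C₂ hc hc_supp, Hmat_mul_diff C₁ C₂ hc hc_supp]
    simp only [flipMapMatrix_eq]
    rw [← monMatrix_add, ← monMatrix_sub]
    congr 1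
    rw [hψ'def]
    abel
end

section
/- Let 𝔽 be a field and let C = (m, gr, d) be a reduced matrix-model bigraded complex over 𝔽. Let p₁, p₂, p₃, p₄ be four distinct indices with gr(p₂) = (gr_w(p₁) + 1, gr_z(p₁) − 1), gr(p₃) = (gr_w(p₁) − 1, gr_z(p₁) + 1), and gr(p₄) = gr(p₁). Suppose d(p₁,p₂) ≠ 0, d(p₁,p₃) ≠ 0, d(p₂,p₄) ≠ 0, and d(p₃,p₄) ≠ 0 (so these four entries are length-one horizontal and vertical arrows), and suppose these four entries are the only horizontal or vertical arrows of d involving p₁, p₂, p₃, or p₄: for every pair (s,t) other than (p₁,p₂), (p₁,p₃), (p₂,p₄), (p₃,p₄) with s or t in {p₁,p₂,p₃,p₄}, if d(s,t) ≠ 0 then gr_w(t) − gr_w(s) ≥ 1 and gr_z(t) − gr_z(s) ≥ 1. Then C is isomorphic, via a homogeneous change of basis, to a matrix-model complex C′ = (m, gr, d′) with the same gradings such that d′(p₁,p₂) = d′(p₁,p₃) = d′(p₂,p₄) = 1 and d′(p₃,p₄) = −1, and every other entry of d′ lying in a row or column indexed by one of p₁, p₂, p₃, p₄ is zero; in other words,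 C splits as a direct sum C′′ ⊕ C_box, where C_box is the four-generator 'box' complex spanned by x_{p₁}, x_{p₂}, x_{p₃}, x_{p₄} with ∂x_{p₁} = U·x_{p₂} + V·x_{p₃}, ∂x_{p₂} = V·x_{p₄}, ∂x_{p₃} = −U·x_{p₄}, ∂x_{p₄} = 0. -/
set_option maxHeartbeats 3200000 in
/-- **Box splitting.** Let `C` be a reduced matrix-model bigraded complex over a field `F`
with four distinct indices `p₁, p₂, p₃, p₄` whose gradings and entries form a 'box' of
length-one horizontal and vertical arrows `p₁ → p₂`, `p₁ → p₃`, `p₂ → p₄`, `p₃ → p₄`, and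
suppose these are the only horizontal or vertical arrows of `d` involving any of these
four indices (every other nonzero entry in their rows and columns raises both gradings by
at least `1`, i.e. is a diagonal arrow).  Then `C` is isomorphic via a homogeneous change
of basis to a complex `C'` with the same gradings in which these four entries are `1`,
`1`, `1`, `-1` and all other entries in the rows and columns of `p₁, p₂, p₃, p₄` vanish;
that is, `C` splits off the four-generator box complex with `∂x₁ = U·x₂ + V·x₃`,
`∂x₂ = V·x₄`, `∂x₃ = −U·x₄`, `∂x₄ = 0`. -/
theorem split_off_box_summand (F : Type) [Field F] (m : ℕ)
    (C : BigradedComplex F m) (hred : C.Reduced)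
    (p₁ p₂ p₃ p₄ : Fin m)
    (h12 : p₁ ≠ p₂) (h13 : p₁ ≠ p₃) (h14 : p₁ ≠ p₄)
    (h23 : p₂ ≠ p₃) (h24 : p₂ ≠ p₄) (h34 : p₃ ≠ p₄)
    (hg2 : C.grw p₂ = C.grw p₁ + 1 ∧ C.grz p₂ = C.grz p₁ - 1)
    (hg3 : C.grw p₃ = C.grw p₁ - 1 ∧ C.grz p₃ = C.grz p₁ + 1)
    (hg4 : C.grw p₄ = C.grw p₁ ∧ C.grz p₄ = C.grz p₁)
    (hd12 : C.d p₁ p₂ ≠ 0) (hd13 : C.d p₁ p₃ ≠ 0)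
    (hd24 : C.d p₂ p₄ ≠ 0) (hd34 : C.d p₃ p₄ ≠ 0)
    (honly : ∀ s t : Fin m,
      (s = p₁ ∨ s = p₂ ∨ s = p₃ ∨ s = p₄ ∨ t = p₁ ∨ t = p₂ ∨ t = p₃ ∨ t = p₄) →
      ¬((s = p₁ ∧ t = p₂) ∨ (s = p₁ ∧ t = p₃) ∨ (s = p₂ ∧ t = p₄) ∨ (s = p₃ ∧ t = p₄)) →
      C.d s t ≠ 0 → 1 ≤ C.grw t - C.grw s ∧ 1 ≤ C.grz t - C.grz s) :
    ∃ C' : BigradedComplex F m,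
      C'.grw = C.grw ∧ C'.grz = C.grz ∧ C.Isomorphic C' ∧
      C'.d p₁ p₂ = 1 ∧ C'.d p₁ p₃ = 1 ∧ C'.d p₂ p₄ = 1 ∧ C'.d p₃ p₄ = -1 ∧
      (∀ s t : Fin m,
        (s = p₁ ∨ s = p₂ ∨ s = p₃ ∨ s = p₄ ∨ t = p₁ ∨ t = p₂ ∨ t = p₃ ∨ t = p₄) →
        ¬((s = p₁ ∧ t = p₂) ∨ (s = p₁ ∧ t = p₃) ∨ (s = p₂ ∧ t = p₄) ∨
          (s = p₃ ∧ t = p₄)) →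
        C'.d s t = 0) := by
  classical
  obtain ⟨hg2w, hg2z⟩ := hg2
  obtain ⟨hg3w, hg3z⟩ := hg3
  obtain ⟨hg4w, hg4z⟩ := hg4
  set box : Fin m → Prop := fun i => i = p₁ ∨ i = p₂ ∨ i = p₃ ∨ i = p₄ with hbox
  have hbox1 : box p₁ := Or.inl rfl
  have hbox2 : box p₂ := Or.inr (Or.inl rfl)
  have hbox3 : box p₃ := Or.inr (Or.inr (Or.inl rfl))
  have hbox4 : box p₄ := Or.inr (Or.inr (Or.inr rfl))
  have hSig : ∀ i, box i → C.grw i + C.grz i = C.grw p₁ + C.grz p₁ := by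
    intro i hi
    simp only [hbox] at hi
    rcases hi with rfl | rfl | rfl | rfl <;> omega
  have hnfp_t : ∀ s t : Fin m, ¬ box t →
      ¬((s = p₁ ∧ t = p₂) ∨ (s = p₁ ∧ t = p₃) ∨ (s = p₂ ∧ t = p₄) ∨ (s = p₃ ∧ t = p₄)) := by
    intro s t ht hf
    simp only [hbox, not_or] at ht
    obtain ⟨h1', h2', h3', h4'⟩ := ht
    rcases hf with ⟨_, h⟩ | ⟨_, h⟩ | ⟨_, h⟩ | ⟨_, h⟩
    exacts [h2' h, h3' h, h4' h, h4' h]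
  have hnfp_s : ∀ s t : Fin m, ¬ box s →
      ¬((s = p₁ ∧ t = p₂) ∨ (s = p₁ ∧ t = p₃) ∨ (s = p₂ ∧ t = p₄) ∨ (s = p₃ ∧ t = p₄)) := by
    intro s t hs hf
    simp only [hbox, not_or] at hs
    obtain ⟨h1', h2', h3', h4'⟩ := hs
    rcases hf with ⟨h, _⟩ | ⟨h, _⟩ | ⟨h, _⟩ | ⟨h, _⟩
    exacts [h1' h, h1' h, h2' h, h3' h]
  have honly' : ∀ s t : Fin m, (box s ∨ box t) →
      ¬((s = p₁ ∧ t = p₂) ∨ (s = p₁ ∧ t = p₃) ∨ (s = p₂ ∧ t = p₄) ∨ (s = p₃ ∧ t = p₄)) →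
      C.d s t ≠ 0 → 1 ≤ C.grw t - C.grw s ∧ 1 ≤ C.grz t - C.grz s := by
    intro s t hst h2 h3
    apply honly s t _ h2 h3
    simp only [hbox] at hst
    rcases hst with (h|h|h|h) | (h|h|h|h)
    exacts [Or.inl h, Or.inr (Or.inl h), Or.inr (Or.inr (Or.inl h)),
      Or.inr (Or.inr (Or.inr (Or.inl h))),
      Or.inr (Or.inr (Or.inr (Or.inr (Or.inl h)))),
      Or.inr (Or.inr (Or.inr (Or.inr (Or.inr (Or.inl h))))),
      Or.inr (Or.inr (Or.inr (Or.inr (Or.inr (Or.inr (Or.inl h)))))),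
      Or.inr (Or.inr (Or.inr (Or.inr (Or.inr (Or.inr (Or.inr h))))))]
  have hodd : ∀ s t : Fin m, C.d s t ≠ 0 →
      (C.grw t - C.grw s) % 2 = 1 ∧ (C.grz t - C.grz s) % 2 = 1 := by
    intro s t h
    obtain ⟨ho, -, -⟩ := C.d_supp s t h
    have hps := C.parity s
    have hpt := C.parity t
    rw [Int.odd_iff] at ho
    omega
  have hbox0 : ∀ s t : Fin m, box s → box t →
      ¬((s = p₁ ∧ t = p₂) ∨ (s = p₁ ∧ t = p₃) ∨ (s = p₂ ∧ t = p₄) ∨ (s = p₃ ∧ t = p₄)) →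
      C.d s t = 0 := by
    intro s t hs ht hnf
    by_contra h
    obtain ⟨h1', h2'⟩ := honly' s t (Or.inl hs) hnf h
    have e1 := hSig s hs
    have e2 := hSig t ht
    omega
  have hcross : ∀ s t k : Fin m, box s → box t → ¬ box k → C.d s k * C.d k t = 0 := by
    intro s t k hs ht hk
    rcases eq_or_ne (C.d s k) 0 with h | h
    · rw [h, zero_mul]
    rcases eq_or_ne (C.d k t) 0 with h' | h'
    · rw [h', mul_zero]
    exfalso
    obtain ⟨a1, a2⟩ := honly' s k (Or.inl hs) (hnfp_t s k hk) h
    obtain ⟨b1, b2⟩ := honly' k t (Or.inr ht) (hnfp_s k t hk) h'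
    have e1 := hSig s hs
    have e2 := hSig t ht
    omega
  set a := C.d p₁ p₂ with ha
  set b := C.d p₁ p₃ with hb
  set c := C.d p₂ p₄ with hc
  set e := C.d p₃ p₄ with he
  -- a*c + b*e = 0
  have hsum : a * c + b * e = 0 := by
    have h00 : (C.d * C.d) p₁ p₄ = 0 := by rw [C.d_sq]; rfl
    rw [Matrix.mul_apply] at h00
    have hss : ∑ k ∈ ({p₂, p₃} : Finset (Fin m)), C.d p₁ k * C.d k p₄
        = ∑ k, C.d p₁ k * C.d k p₄ := by
      apply Finset.sum_subset (Finset.subset_univ _)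
      intro k _ hk
      simp only [Finset.mem_insert, Finset.mem_singleton, not_or] at hk
      obtain ⟨hk2, hk3⟩ := hk
      by_cases hbk : box k
      · have hbk' := hbk
        simp only [hbox] at hbk'
        rcases hbk' with h' | h' | h' | h'
        · rw [h', hbox0 p₁ p₁ hbox1 hbox1
            (by rintro (⟨-, h⟩ | ⟨-, h⟩ | ⟨h, -⟩ | ⟨h, -⟩); exacts [h12 h, h13 h, h12 h, h13 h]), zero_mul]
        · exact absurd h' hk2
        · exact absurd h' hk3
        · rw [h', hbox0 p₁ p₄ hbox1 hbox4
            (by rintro (⟨-, h⟩ | ⟨-, h⟩ | ⟨h, -⟩ | ⟨h, -⟩); exacts [h24 h.symm, h34 h.symm, h12 h, h13 h]), zero_mul]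
      · exact hcross p₁ p₄ k hbox1 hbox4 hbk
    rw [← hss, Finset.sum_pair h23] at h00
    rw [ha, hb, hc, he]
    exact h00
  -- the projections onto the box and its complement
  set pind : Fin m → F := fun i => if box i then 1 else 0 with hpind
  set qind : Fin m → F := fun i => if box i then 0 else 1 with hqind
  have hpind1 : ∀ i, box i → pind i = 1 := by intro i hi; rw [hpind]; simp only [if_pos hi]
  have hpind0 : ∀ i, ¬ box i → pind i = 0 := by intro i hi; rw [hpind]; simp only [if_neg hi]
  have hqind0 : ∀ i, box i → qind i = 0 := by intro i hi; rw [hqind]; simp only [if_pos hi]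
  have hqind1 : ∀ i, ¬ box i → qind i = 1 := by intro i hi; rw [hqind]; simp only [if_neg hi]
  set P : Matrix (Fin m) (Fin m) F := Matrix.diagonal pind with hP
  set Q : Matrix (Fin m) (Fin m) F := Matrix.diagonal qind with hQ
  have hPQ1 : P + Q = 1 := by
    rw [hP, hQ, Matrix.diagonal_add]
    have : (fun i => pind i + qind i) = fun _ => (1 : F) := by
      funext i
      by_cases h : box i
      · rw [hpind1 i h, hqind0 i h, add_zero]
      · rw [hpind0 i h, hqind1 i h, zero_add]
    rw [this, Matrix.diagonal_one]
  have hPP : P * P = P := by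
    rw [hP, Matrix.diagonal_mul_diagonal]
    have : (fun i => pind i * pind i) = pind := by
      funext i
      by_cases h : box i
      · rw [hpind1 i h, mul_one]
      · rw [hpind0 i h, mul_zero]
    rw [this]
  have hQQ : Q * Q = Q := by
    rw [hQ, Matrix.diagonal_mul_diagonal]
    have : (fun i => qind i * qind i) = qind := by
      funext i
      by_cases h : box i
      · rw [hqind0 i h, mul_zero]
      · rw [hqind1 i h, mul_one]
    rw [this]
  have hPQ0 : P * Q = 0 := by
    rw [hP, hQ, Matrix.diagonal_mul_diagonal]
    have : (fun i => pind i * qind i) = fun _ => (0 : F) := by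
      funext i
      by_cases h : box i
      · rw [hqind0 i h, mul_zero]
      · rw [hpind0 i h, zero_mul]
    rw [this]
    exact Matrix.diagonal_zero
  have hQP0 : Q * P = 0 := by
    rw [hP, hQ, Matrix.diagonal_mul_diagonal]
    have : (fun i => qind i * pind i) = fun _ => (0 : F) := by
      funext i
      by_cases h : box i
      · rw [hqind0 i h, zero_mul]
      · rw [hpind0 i h, mul_zero]
    rw [this]
    exact Matrix.diagonal_zero
  -- the contracting homotopy of the box
  set K : Matrix (Fin m) (Fin m) F :=
    Matrix.single p₃ p₁ b⁻¹ + Matrix.single p₄ p₂ c⁻¹ with hK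
  have hKapp : ∀ i j, K i j =
      (if p₃ = i ∧ p₁ = j then b⁻¹ else 0) + (if p₄ = i ∧ p₂ = j then c⁻¹ else 0) := by
    intro i j; rw [hK]; rfl
  have hKA : ∀ (A : Matrix (Fin m) (Fin m) F) i j,
      (K * A) i j = (if i = p₃ then b⁻¹ * A p₁ j else 0) + (if i = p₄ then c⁻¹ * A p₂ j else 0) := by
    intro A i j
    rw [hK, Matrix.add_mul, Matrix.add_apply]
    congr 1
    · by_cases h : i = p₃
      · subst h; rw [Matrix.single_mul_apply_same, if_pos rfl]
      · rw [if_neg h, Matrix.single_mul_apply_of_ne _ _ _ _ _ h]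
    · by_cases h : i = p₄
      · subst h; rw [Matrix.single_mul_apply_same, if_pos rfl]
      · rw [if_neg h, Matrix.single_mul_apply_of_ne _ _ _ _ _ h]
  have hAK : ∀ (A : Matrix (Fin m) (Fin m) F) i j,
      (A * K) i j = (if j = p₁ then A i p₃ * b⁻¹ else 0) + (if j = p₂ then A i p₄ * c⁻¹ else 0) := by
    intro A i j
    rw [hK, Matrix.mul_add, Matrix.add_apply]
    congr 1
    · by_cases h : j = p₁
      · subst h; rw [Matrix.mul_single_apply_same, if_pos rfl]
      · rw [if_neg h, Matrix.mul_single_apply_of_ne _ _ _ _ _ h]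
    · by_cases h : j = p₂
      · subst h; rw [Matrix.mul_single_apply_same, if_pos rfl]
      · rw [if_neg h, Matrix.mul_single_apply_of_ne _ _ _ _ _ h]
  have hKp₁ : ∀ j, K p₁ j = 0 := by
    intro j
    rw [hKapp, if_neg (fun h => h13 h.1.symm), if_neg (fun h => h14 h.1.symm), add_zero]
  have hKp₂ : ∀ j, K p₂ j = 0 := by
    intro j
    rw [hKapp, if_neg (fun h => h23 h.1.symm), if_neg (fun h => h24 h.1.symm), add_zero]
  have hPK : P * K = K := by
    ext i j
    rw [hP, Matrix.diagonal_mul]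
    by_cases hbi : box i
    · rw [hpind1 i hbi, one_mul]
    · rw [hpind0 i hbi, zero_mul, hKapp,
        if_neg (show ¬(p₃ = i ∧ p₁ = j) by rintro ⟨rfl, -⟩; exact hbi hbox3),
        if_neg (show ¬(p₄ = i ∧ p₂ = j) by rintro ⟨rfl, -⟩; exact hbi hbox4), add_zero]
  have hKP : K * P = K := by
    ext i j
    rw [hP, Matrix.mul_diagonal]
    by_cases hbj : box j
    · rw [hpind1 j hbj, mul_one]
    · rw [hpind0 j hbj, mul_zero, hKapp,
        if_neg (show ¬(p₃ = i ∧ p₁ = j) by rintro ⟨-, rfl⟩; exact hbj hbox1),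
        if_neg (show ¬(p₄ = i ∧ p₂ = j) by rintro ⟨-, rfl⟩; exact hbj hbox2), add_zero]
  have hQK : Q * K = 0 := by rw [← hPK, ← mul_assoc, hQP0, zero_mul]
  have hKQ : K * Q = 0 := by rw [← hKP, mul_assoc, hPQ0, mul_zero]
  have hKc₃ : ∀ i, K i p₃ = 0 := by
    intro i
    rw [hKapp, if_neg (fun h => h13 h.2), if_neg (fun h => h23 h.2), add_zero]
  have hKc₄ : ∀ i, K i p₄ = 0 := by
    intro i
    rw [hKapp, if_neg (fun h => h14 h.2), if_neg (fun h => h24 h.2), add_zero]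
  have hKK : K * K = 0 := by
    ext i j
    rw [hAK K i j, hKc₃ i, hKc₄ i, Matrix.zero_apply]
    simp
  -- block decomposition of d
  set B : Matrix (Fin m) (Fin m) F := P * C.d * P with hB
  set X : Matrix (Fin m) (Fin m) F := P * C.d * Q with hX
  set Y : Matrix (Fin m) (Fin m) F := Q * C.d * P with hY
  set W : Matrix (Fin m) (Fin m) F := Q * C.d * Q with hW
  have hBapp : ∀ i j, B i j = pind i * C.d i j * pind j := by
    intro i j; rw [hB, hP, Matrix.mul_diagonal, Matrix.diagonal_mul]
  have hXapp : ∀ i j, X i j = pind i * C.d i j * qind j := by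
    intro i j; rw [hX, hP, hQ, Matrix.mul_diagonal, Matrix.diagonal_mul]
  have hYapp : ∀ i j, Y i j = qind i * C.d i j * pind j := by
    intro i j; rw [hY, hP, hQ, Matrix.mul_diagonal, Matrix.diagonal_mul]
  have hWapp : ∀ i j, W i j = qind i * C.d i j * qind j := by
    intro i j; rw [hW, hQ, Matrix.mul_diagonal, Matrix.diagonal_mul]
  have h1sum : B + X + Y + W = C.d := by
    rw [hB, hX, hY, hW]
    trans (P + Q) * C.d * (P + Q)
    · noncomm_ring
    rw [hPQ1, one_mul, mul_one]
  -- structural vanishing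
  have hz1 : ∀ A A' : Matrix (Fin m) (Fin m) F, (A * Q) * (P * A') = 0 := by
    intro A A'
    rw [mul_assoc, ← mul_assoc Q P A', hQP0, zero_mul, mul_zero]
  have hz2 : ∀ A A' : Matrix (Fin m) (Fin m) F, (A * P) * (Q * A') = 0 := by
    intro A A'
    rw [mul_assoc, ← mul_assoc P Q A', hPQ0, zero_mul, mul_zero]
  have hXX : X * X = 0 := by
    trans ((P * C.d) * Q) * (P * (C.d * Q))
    · rw [hX]; noncomm_ring
    exact hz1 _ _
  have hXB : X * B = 0 := by
    trans ((P * C.d) * Q) * (P * (C.d * P))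
    · rw [hX, hB]; noncomm_ring
    exact hz1 _ _
  have hBY : B * Y = 0 := by
    trans ((P * C.d) * P) * (Q * (C.d * P))
    · rw [hB, hY]; noncomm_ring
    exact hz2 _ _
  have hYY : Y * Y = 0 := by
    trans ((Q * C.d) * P) * (Q * (C.d * P))
    · rw [hY]; noncomm_ring
    exact hz2 _ _
  have hXK : X * K = 0 := by rw [hX, mul_assoc, hQK, mul_zero]
  have hKY : K * Y = 0 := by rw [hY, ← mul_assoc, ← mul_assoc, hKQ, zero_mul, zero_mul]
  have hWK : W * K = 0 := by rw [hW, mul_assoc, hQK, mul_zero]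
  have hKW : K * W = 0 := by rw [hW, ← mul_assoc, ← mul_assoc, hKQ, zero_mul, zero_mul]
  have hPX : P * X = X := by
    rw [hX, ← mul_assoc, ← mul_assoc, hPP]
  have hYP : Y * P = Y := by
    rw [hY, mul_assoc, hPP]
  have hXY : X * Y = 0 := by
    ext i j
    rw [Matrix.mul_apply, Matrix.zero_apply]
    apply Finset.sum_eq_zero
    intro k _
    rw [hXapp, hYapp]
    by_cases hbk : box k
    · rw [hqind0 k hbk]; ring
    by_cases hbi : box i
    · by_cases hbj : box j
      · rcases mul_eq_zero.mp (hcross i j k hbi hbj hbk) with h | h <;> rw [h] <;> ring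
      · rw [hpind0 j hbj]; ring
    · rw [hpind0 i hbi]; ring
  -- entries of the box block
  have hBr1 : ∀ j, B p₁ j = if j = p₂ then a else if j = p₃ then b else 0 := by
    intro j
    rw [hBapp, hpind1 p₁ hbox1, one_mul]
    by_cases hj2 : j = p₂
    · rw [hj2, if_pos rfl, hpind1 p₂ hbox2, mul_one, ha]
    rw [if_neg hj2]
    by_cases hj3 : j = p₃
    · rw [hj3, if_pos rfl, hpind1 p₃ hbox3, mul_one, hb]
    rw [if_neg hj3]
    by_cases hbj : box j
    · rw [hpind1 j hbj, mul_one]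
      have hbj' := hbj
      simp only [hbox] at hbj'
      rcases hbj' with h' | h' | h' | h'
      · rw [h']
        exact hbox0 p₁ p₁ hbox1 hbox1
          (by rintro (⟨-, h⟩ | ⟨-, h⟩ | ⟨h, -⟩ | ⟨h, -⟩); exacts [h12 h, h13 h, h12 h, h13 h])
      · exact absurd h' hj2
      · exact absurd h' hj3
      · rw [h']
        exact hbox0 p₁ p₄ hbox1 hbox4
          (by rintro (⟨-, h⟩ | ⟨-, h⟩ | ⟨h, -⟩ | ⟨h, -⟩); exacts [h24 h.symm, h34 h.symm, h12 h, h13 h])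
    · rw [hpind0 j hbj, mul_zero]
  have hBr2 : ∀ j, B p₂ j = if j = p₄ then c else 0 := by
    intro j
    rw [hBapp, hpind1 p₂ hbox2, one_mul]
    by_cases hj4 : j = p₄
    · rw [hj4, if_pos rfl, hpind1 p₄ hbox4, mul_one, hc]
    rw [if_neg hj4]
    by_cases hbj : box j
    · rw [hpind1 j hbj, mul_one]
      have hbj' := hbj
      simp only [hbox] at hbj'
      rcases hbj' with h' | h' | h' | h'
      · rw [h']
        exact hbox0 p₂ p₁ hbox2 hbox1
          (by rintro (⟨h, -⟩ | ⟨h, -⟩ | ⟨-, h⟩ | ⟨h, -⟩); exacts [h12 h.symm, h12 h.symm, h14 h, h23 h])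
      · rw [h']
        exact hbox0 p₂ p₂ hbox2 hbox2
          (by rintro (⟨h, -⟩ | ⟨h, -⟩ | ⟨-, h⟩ | ⟨h, -⟩); exacts [h12 h.symm, h12 h.symm, h24 h, h23 h])
      · rw [h']
        exact hbox0 p₂ p₃ hbox2 hbox3
          (by rintro (⟨h, -⟩ | ⟨h, -⟩ | ⟨-, h⟩ | ⟨h, -⟩); exacts [h12 h.symm, h12 h.symm, h34 h, h23 h])
      · exact absurd h' hj4
    · rw [hpind0 j hbj, mul_zero]
  have hBc3 : ∀ i, B i p₃ = if i = p₁ then b else 0 := by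
    intro i
    rw [hBapp, hpind1 p₃ hbox3, mul_one]
    by_cases hi1 : i = p₁
    · rw [hi1, if_pos rfl, hpind1 p₁ hbox1, one_mul, hb]
    rw [if_neg hi1]
    by_cases hbi : box i
    · rw [hpind1 i hbi, one_mul]
      have hbi' := hbi
      simp only [hbox] at hbi'
      rcases hbi' with h' | h' | h' | h'
      · exact absurd h' hi1
      · rw [h']
        exact hbox0 p₂ p₃ hbox2 hbox3
          (by rintro (⟨h, -⟩ | ⟨h, -⟩ | ⟨-, h⟩ | ⟨h, -⟩); exacts [h12 h.symm, h12 h.symm, h34 h, h23 h])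
      · rw [h']
        exact hbox0 p₃ p₃ hbox3 hbox3
          (by rintro (⟨h, -⟩ | ⟨h, -⟩ | ⟨h, -⟩ | ⟨-, h⟩); exacts [h13 h.symm, h13 h.symm, h23 h.symm, h34 h])
      · rw [h']
        exact hbox0 p₄ p₃ hbox4 hbox3
          (by rintro (⟨h, -⟩ | ⟨h, -⟩ | ⟨h, -⟩ | ⟨h, -⟩); exacts [h14 h.symm, h14 h.symm, h24 h.symm, h34 h.symm])
    · rw [hpind0 i hbi, zero_mul]
  have hBc4 : ∀ i, B i p₄ = if i = p₂ then c else if i = p₃ then e else 0 := by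
    intro i
    rw [hBapp, hpind1 p₄ hbox4, mul_one]
    by_cases hi2 : i = p₂
    · rw [hi2, if_pos rfl, hpind1 p₂ hbox2, one_mul, hc]
    rw [if_neg hi2]
    by_cases hi3 : i = p₃
    · rw [hi3, if_pos rfl, hpind1 p₃ hbox3, one_mul, he]
    rw [if_neg hi3]
    by_cases hbi : box i
    · rw [hpind1 i hbi, one_mul]
      have hbi' := hbi
      simp only [hbox] at hbi'
      rcases hbi' with h' | h' | h' | h'
      · rw [h']
        exact hbox0 p₁ p₄ hbox1 hbox4
          (by rintro (⟨-, h⟩ | ⟨-, h⟩ | ⟨h, -⟩ | ⟨h, -⟩); exacts [h24 h.symm, h34 h.symm, h12 h, h13 h])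
      · exact absurd h' hi2
      · exact absurd h' hi3
      · rw [h']
        exact hbox0 p₄ p₄ hbox4 hbox4
          (by rintro (⟨h, -⟩ | ⟨h, -⟩ | ⟨h, -⟩ | ⟨h, -⟩); exacts [h14 h.symm, h14 h.symm, h24 h.symm, h34 h.symm])
    · rw [hpind0 i hbi, zero_mul]
  have vB33 : B p₃ p₃ = 0 := by rw [hBc3]; exact if_neg (fun h => h13 h.symm)
  have vB34 : B p₃ p₄ = e := by rw [hBc4, if_neg (fun h => h23 h.symm), if_pos rfl]
  have vB43 : B p₄ p₃ = 0 := by rw [hBc3]; exact if_neg (fun h => h14 h.symm)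
  have vB44 : B p₄ p₄ = 0 := by
    rw [hBc4, if_neg (fun h => h24 h.symm), if_neg (fun h => h34 h.symm)]
  have vB13 : B p₁ p₃ = b := by rw [hBc3, if_pos rfl]
  have vB14 : B p₁ p₄ = 0 := by rw [hBc4, if_neg h12, if_neg h13]
  have vB23 : B p₂ p₃ = 0 := by rw [hBc3]; exact if_neg (fun h => h12 h.symm)
  have vB24 : B p₂ p₄ = c := by rw [hBc4, if_pos rfl]
  -- the key homotopy identity K*B + B*K = P
  have hKBBK : K * B + B * K = P := by
    ext i j
    rw [Matrix.add_apply, hKA B i j, hAK B i j, hP, Matrix.diagonal_apply]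
    by_cases hi3 : i = p₃
    · rw [hi3, if_pos rfl, if_neg h34, add_zero, hBr1 j, vB33, vB34]
      by_cases hj2 : j = p₂
      · rw [hj2, if_pos rfl, if_pos rfl, if_neg (fun h : p₂ = p₁ => h12 h.symm),
          if_neg (show ¬ p₃ = p₂ from fun h => h23 h.symm)]
        have hbne : b ≠ 0 := hd13
        have hcne : c ≠ 0 := hd24
        field_simp
        linear_combination hsum
      by_cases hj3 : j = p₃
      · rw [hj3, if_neg (show ¬ p₃ = p₂ from fun h => h23 h.symm), if_pos rfl,
          if_neg (fun h : p₃ = p₁ => h13 h.symm),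
          if_neg (show ¬ p₃ = p₂ from fun h => h23 h.symm),
          if_pos rfl, hpind1 p₃ hbox3, inv_mul_cancel₀ hd13]
        simp
      · simp [hj2, hj3, show p₃ ≠ j from fun h => hj3 h.symm]
    rw [if_neg hi3]
    by_cases hi4 : i = p₄
    · rw [hi4, if_pos rfl, hBr2 j, vB43, vB44]
      by_cases hj4 : j = p₄
      · rw [hj4]
        simp [show ¬ p₄ = p₁ from fun h => h14 h.symm, show ¬ p₄ = p₂ from fun h => h24 h.symm,
          hpind1 p₄ hbox4, inv_mul_cancel₀ hd24]
      · simp [hj4, show p₄ ≠ j from fun h => hj4 h.symm]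
    rw [if_neg hi4]
    by_cases hi1 : i = p₁
    · rw [hi1, vB13, vB14]
      by_cases hj1 : j = p₁
      · rw [hj1]
        simp [show ¬ p₁ = p₂ from h12, hpind1 p₁ hbox1, mul_inv_cancel₀ hd13]
      · simp [hj1, show p₁ ≠ j from fun h => hj1 h.symm]
    by_cases hi2 : i = p₂
    · rw [hi2, vB23, vB24]
      by_cases hj2 : j = p₂
      · rw [hj2]
        simp [show ¬ p₂ = p₁ from fun h => h12 h.symm, hpind1 p₂ hbox2, mul_inv_cancel₀ hd24]
      · simp [hj2, show p₂ ≠ j from fun h => hj2 h.symm]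
    · have hnbi : ¬ box i := by
        simp only [hbox]
        push_neg
        exact ⟨hi1, hi2, hi3, hi4⟩
      simp [hBc3, hBc4, hi1, hi2, hi3, hpind0 i hnbi]
  -- consequences of d*d = 0
  have hBXXW : B * X + X * W = 0 := by
    trans ((P * C.d) * ((P * P) * (C.d * Q)) + (P * C.d) * ((Q * Q) * (C.d * Q)))
    · rw [hB, hX, hW]; noncomm_ring
    rw [hPP, hQQ]
    trans (P * C.d) * ((P + Q) * (C.d * Q))
    · noncomm_ring
    rw [hPQ1, one_mul, ← mul_assoc, mul_assoc P C.d C.d, C.d_sq, mul_zero, zero_mul]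
  have hYBWY : Y * B + W * Y = 0 := by
    trans ((Q * C.d) * ((P * P) * (C.d * P)) + (Q * C.d) * ((Q * Q) * (C.d * P)))
    · rw [hB, hY, hW]; noncomm_ring
    rw [hPP, hQQ]
    trans (Q * C.d) * ((P + Q) * (C.d * P))
    · noncomm_ring
    rw [hPQ1, one_mul, ← mul_assoc, mul_assoc Q C.d C.d, C.d_sq, mul_zero, zero_mul]
  have hXd : X * C.d = -(B * X) := by
    have h1 : X * C.d = X * B + X * X + X * Y + X * W := by
      rw [← h1sum]; noncomm_ring
    rw [h1, hXB, hXX, hXY, zero_add, zero_add, zero_add]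
    exact eq_neg_of_add_eq_zero_left (by rw [add_comm]; exact hBXXW)
  have hdY : C.d * Y = -(Y * B) := by
    have h1 : C.d * Y = B * Y + X * Y + Y * Y + W * Y := by
      rw [← h1sum]; noncomm_ring
    rw [h1, hBY, hXY, hYY, zero_add, zero_add, zero_add]
    exact eq_neg_of_add_eq_zero_left (by rw [add_comm]; exact hYBWY)
  have hKd : K * C.d = K * B + K * X := by
    have h1 : K * C.d = K * B + K * X + (K * Y + K * W) := by
      rw [← h1sum]; noncomm_ring
    rw [h1, hKY, hKW, add_zero, add_zero]
  have hdK : C.d * K = B * K + Y * K := by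
    have h1 : C.d * K = B * K + Y * K + (X * K + W * K) := by
      rw [← h1sum]; noncomm_ring
    rw [h1, hXK, hWK, add_zero, add_zero]
  -- products with the correction terms
  have t1 : (K * X) * C.d = -(K * (B * X)) := by
    rw [mul_assoc, hXd, mul_neg]
  have t2 : (Y * K) * C.d = Y * (K * B) + Y * (K * X) := by
    rw [mul_assoc, hKd, mul_add]
  have t3 : C.d * (K * X) = (B * K) * X + (Y * K) * X := by
    rw [← mul_assoc, hdK, add_mul]
  have t4 : C.d * (Y * K) = -((Y * B) * K) := by
    rw [← mul_assoc, hdY, neg_mul]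
  have t5 : (K * X) * (C.d * (K * X)) = 0 := by
    rw [t3, mul_add]
    have e1 : (K * X) * ((B * K) * X) = ((K * (X * B)) * K) * X := by noncomm_ring
    have e2 : (K * X) * ((Y * K) * X) = ((K * (X * Y)) * K) * X := by noncomm_ring
    rw [e1, e2, hXB, hXY]
    simp
  have t6 : (K * X) * (C.d * (Y * K)) = 0 := by
    rw [t4, mul_neg]
    have e1 : (K * X) * ((Y * B) * K) = ((K * (X * Y)) * B) * K := by noncomm_ring
    rw [e1, hXY]
    simp
  have t7 : (Y * K) * (C.d * (K * X)) = Y * (K * X) := by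
    rw [t3, mul_add]
    have e2 : (Y * K) * ((Y * K) * X) = ((Y * (K * Y)) * K) * X := by noncomm_ring
    rw [e2, hKY]
    have hBK2 : B * K = P - K * B := by
      rw [eq_sub_iff_add_eq, add_comm]
      exact hKBBK
    have e1 : (Y * K) * ((B * K) * X) = (Y * K) * ((B * K) * X) := rfl
    rw [hBK2, sub_mul, mul_sub, hPX]
    have e3 : (Y * K) * ((K * B) * X) = ((Y * (K * K)) * B) * X := by noncomm_ring
    rw [e3, hKK]
    have e4 : (Y * K) * X = Y * (K * X) := by noncomm_ring
    rw [e4]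
    simp
  have t8 : (Y * K) * (C.d * (Y * K)) = 0 := by
    rw [t4, mul_neg]
    have e1 : (Y * K) * ((Y * B) * K) = ((Y * (K * Y)) * B) * K := by noncomm_ring
    rw [e1, hKY]
    simp
  set L : Matrix (Fin m) (Fin m) F := 1 + K * X - Y * K with hL
  set R : Matrix (Fin m) (Fin m) F := 1 - K * X + Y * K with hR
  have huu : (K * X) * (K * X) = 0 := by
    have e : (K * X) * (K * X) = (K * (X * K)) * X := by noncomm_ring
    rw [e, hXK]; simp
  have huv : (K * X) * (Y * K) = 0 := by
    have e : (K * X) * (Y * K) = (K * (X * Y)) * K := by noncomm_ring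
    rw [e, hXY]; simp
  have hvu : (Y * K) * (K * X) = 0 := by
    have e : (Y * K) * (K * X) = (Y * (K * K)) * X := by noncomm_ring
    rw [e, hKK]; simp
  have hvv : (Y * K) * (Y * K) = 0 := by
    have e : (Y * K) * (Y * K) = (Y * (K * Y)) * K := by noncomm_ring
    rw [e, hKY]; simp
  have hRL : R * L = 1 := by
    rw [hR, hL]
    trans 1 - (K * X) * (K * X) + (K * X) * (Y * K) + (Y * K) * (K * X) - (Y * K) * (Y * K)
    · noncomm_ring
    rw [huu, huv, hvu, hvv]
    simp
  have hLR : L * R = 1 := by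
    rw [hR, hL]
    trans 1 - (K * X) * (K * X) + (K * X) * (Y * K) + (Y * K) * (K * X) - (Y * K) * (Y * K)
    · noncomm_ring
    rw [huu, huv, hvu, hvv]
    simp
  set M : Matrix (Fin m) (Fin m) F := B + W - Y * (K * X) with hM
  have hMain : L * C.d * R = M := by
    trans (C.d + (K * X) * C.d - (Y * K) * C.d - C.d * (K * X) + C.d * (Y * K)
      - (K * X) * (C.d * (K * X)) + (K * X) * (C.d * (Y * K))
      + (Y * K) * (C.d * (K * X)) - (Y * K) * (C.d * (Y * K)))
    · rw [hL, hR]; noncomm_ring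
    rw [t5, t6, t7, t8, t1, t2, t3, t4, hM, ← h1sum]
    have e1 : (K * B + B * K) * X = X := by rw [hKBBK, hPX]
    have e2 : Y * (K * B + B * K) = Y := by rw [hKBBK, hYP]
    trans ((B + W - Y * (K * X)) + (X - (K * B + B * K) * X) + (Y - Y * (K * B + B * K)))
    · noncomm_ring
    rw [e1, e2]
    simp
  have hMM : M * M = 0 := by
    rw [← hMain]
    have e1 : (L * C.d * R) * (L * C.d * R) = L * C.d * ((R * L) * (C.d * R)) := by noncomm_ring
    rw [e1, hRL, one_mul, ← mul_assoc, mul_assoc L C.d C.d, C.d_sq, mul_zero, zero_mul]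
  -- the diagonal rescaling
  set lam : Fin m → F := fun i =>
    if i = p₂ then a⁻¹ else if i = p₃ then b⁻¹ else if i = p₄ then a⁻¹ * c⁻¹ else 1 with hlam
  have hlam_ne : ∀ i, lam i ≠ 0 := by
    intro i
    rw [hlam]
    dsimp only
    split_ifs
    · exact inv_ne_zero hd12
    · exact inv_ne_zero hd13
    · exact mul_ne_zero (inv_ne_zero hd12) (inv_ne_zero hd24)
    · exact one_ne_zero
  set Dg : Matrix (Fin m) (Fin m) F := Matrix.diagonal lam with hDg
  set Dg' : Matrix (Fin m) (Fin m) F := Matrix.diagonal (fun i => (lam i)⁻¹) with hDg'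
  have hDD' : Dg * Dg' = 1 := by
    rw [hDg, hDg', Matrix.diagonal_mul_diagonal]
    have : (fun i => lam i * (lam i)⁻¹) = fun _ => (1 : F) := by
      funext i
      exact mul_inv_cancel₀ (hlam_ne i)
    rw [this, Matrix.diagonal_one]
  have hD'D : Dg' * Dg = 1 := by
    rw [hDg, hDg', Matrix.diagonal_mul_diagonal]
    have : (fun i => (lam i)⁻¹ * lam i) = fun _ => (1 : F) := by
      funext i
      exact inv_mul_cancel₀ (hlam_ne i)
    rw [this, Matrix.diagonal_one]
  have hd'app : ∀ i j, (Dg' * M * Dg) i j = (lam i)⁻¹ * M i j * lam j := by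
    intro i j
    rw [hDg, hDg', Matrix.mul_diagonal, Matrix.diagonal_mul]
  -- support lemmas
  have hY_supp : ∀ i k, Y i k ≠ 0 → ¬ box i ∧ C.d i k ≠ 0 ∧ box k := by
    intro i k h
    rw [hYapp] at h
    by_cases hbi : box i
    · exact absurd (by rw [hqind0 i hbi]; ring) h
    by_cases hbk : box k
    · refine ⟨hbi, fun h0 => h ?_, hbk⟩
      rw [h0]; ring
    · exact absurd (by rw [hpind0 k hbk]; ring) h
  have hKX_supp : ∀ k j, (K * X) k j ≠ 0 →
      ¬ box j ∧ ((k = p₃ ∧ C.d p₁ j ≠ 0) ∨ (k = p₄ ∧ C.d p₂ j ≠ 0)) := by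
    intro k j h
    rw [hKA X k j] at h
    have hXne : ∀ s, X s j ≠ 0 → C.d s j ≠ 0 ∧ ¬ box j := by
      intro s hs
      rw [hXapp] at hs
      by_cases hbj : box j
      · exact absurd (by rw [hqind0 j hbj]; ring) hs
      · refine ⟨fun h0 => hs ?_, hbj⟩
        rw [h0]; ring
    by_cases h3 : k = p₃
    · rw [if_pos h3, if_neg (fun h4 => h34 (h3.symm.trans h4))] at h
      have : X p₁ j ≠ 0 := by
        intro h0
        rw [h0] at h
        simp at h
      obtain ⟨hd, hbj⟩ := hXne p₁ this
      exact ⟨hbj, Or.inl ⟨h3, hd⟩⟩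
    by_cases h4 : k = p₄
    · rw [if_neg h3, if_pos h4] at h
      have : X p₂ j ≠ 0 := by
        intro h0
        rw [h0] at h
        simp at h
      obtain ⟨hd, hbj⟩ := hXne p₂ this
      exact ⟨hbj, Or.inr ⟨h4, hd⟩⟩
    · rw [if_neg h3, if_neg h4] at h
      simp at h
  have hYK_supp : ∀ i j, (Y * K) i j ≠ 0 →
      ¬ box i ∧ ((j = p₁ ∧ C.d i p₃ ≠ 0) ∨ (j = p₂ ∧ C.d i p₄ ≠ 0)) := by
    intro i j h
    rw [hAK Y i j] at h
    by_cases h1 : j = p₁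
    · rw [if_pos h1, if_neg (fun h2 => h12 (h1.symm.trans h2))] at h
      have : Y i p₃ ≠ 0 := by
        intro h0
        rw [h0] at h
        simp at h
      obtain ⟨hbi, hd, -⟩ := hY_supp i p₃ this
      exact ⟨hbi, Or.inl ⟨h1, hd⟩⟩
    by_cases h2 : j = p₂
    · rw [if_neg h1, if_pos h2] at h
      have : Y i p₄ ≠ 0 := by
        intro h0
        rw [h0] at h
        simp at h
      obtain ⟨hbi, hd, -⟩ := hY_supp i p₄ this
      exact ⟨hbi, Or.inr ⟨h2, hd⟩⟩
    · rw [if_neg h1, if_neg h2] at h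
      simp at h
  have hYKX_supp : ∀ i j, (Y * (K * X)) i j ≠ 0 → ∃ k, Y i k ≠ 0 ∧ (K * X) k j ≠ 0 := by
    intro i j h
    rw [Matrix.mul_apply] at h
    obtain ⟨k, -, hk⟩ := Finset.exists_ne_zero_of_sum_ne_zero h
    exact ⟨k, left_ne_zero_of_mul hk, right_ne_zero_of_mul hk⟩
  -- the grading estimate for entries of K*X and Y*K
  have hgrad : ∀ i j : Fin m, (i = j ∨ (K * X) i j ≠ 0 ∨ (Y * K) i j ≠ 0) →
      Even (C.grw j - C.grw i) ∧ 0 ≤ C.grw j - C.grw i ∧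
      Even (C.grz j - C.grz i) ∧ 0 ≤ C.grz j - C.grz i := by
    intro i j hcase
    rcases hcase with rfl | h | h
    · refine ⟨?_, by omega, ?_, by omega⟩ <;> simp
    · obtain ⟨hbj, hc⟩ := hKX_supp i j h
      rcases hc with ⟨rfl, hd⟩ | ⟨rfl, hd⟩
      · obtain ⟨e1, e2⟩ := honly' p₁ j (Or.inl hbox1) (hnfp_t p₁ j hbj) hd
        obtain ⟨o1, o2⟩ := hodd p₁ j hd
        refine ⟨Int.even_iff.mpr (by omega), by omega, Int.even_iff.mpr (by omega), by omega⟩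
      · obtain ⟨e1, e2⟩ := honly' p₂ j (Or.inl hbox2) (hnfp_t p₂ j hbj) hd
        obtain ⟨o1, o2⟩ := hodd p₂ j hd
        refine ⟨Int.even_iff.mpr (by omega), by omega, Int.even_iff.mpr (by omega), by omega⟩
    · obtain ⟨hbi, hc⟩ := hYK_supp i j h
      rcases hc with ⟨rfl, hd⟩ | ⟨rfl, hd⟩
      · obtain ⟨e1, e2⟩ := honly' i p₃ (Or.inr hbox3) (hnfp_s i p₃ hbi) hd
        obtain ⟨o1, o2⟩ := hodd i p₃ hd
        refine ⟨Int.even_iff.mpr (by omega), by omega, Int.even_iff.mpr (by omega), by omega⟩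
      · obtain ⟨e1, e2⟩ := honly' i p₄ (Or.inr hbox4) (hnfp_s i p₄ hbi) hd
        obtain ⟨o1, o2⟩ := hodd i p₄ hd
        refine ⟨Int.even_iff.mpr (by omega), by omega, Int.even_iff.mpr (by omega), by omega⟩
  have hfsupp : ∀ i j, (R * Dg) i j ≠ 0 →
      Even (C.grw j - C.grw i) ∧ 0 ≤ C.grw j - C.grw i ∧
      Even (C.grz j - C.grz i) ∧ 0 ≤ C.grz j - C.grz i := by
    intro i j h
    rw [hDg, Matrix.mul_diagonal] at h
    have hR0 : R i j ≠ 0 := left_ne_zero_of_mul h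
    apply hgrad
    by_contra hcon
    push_neg at hcon
    obtain ⟨hc1, hc2, hc3⟩ := hcon
    apply hR0
    rw [hR, Matrix.add_apply, Matrix.sub_apply, hc2, hc3, Matrix.one_apply_ne hc1]
    ring
  have hgsupp : ∀ i j, (Dg' * L) i j ≠ 0 →
      Even (C.grw j - C.grw i) ∧ 0 ≤ C.grw j - C.grw i ∧
      Even (C.grz j - C.grz i) ∧ 0 ≤ C.grz j - C.grz i := by
    intro i j h
    rw [hDg', Matrix.diagonal_mul] at h
    have hL0 : L i j ≠ 0 := right_ne_zero_of_mul h
    apply hgrad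
    by_contra hcon
    push_neg at hcon
    obtain ⟨hc1, hc2, hc3⟩ := hcon
    apply hL0
    rw [hL, Matrix.sub_apply, Matrix.add_apply, hc2, hc3, Matrix.one_apply_ne hc1]
    ring
  -- entries of M in box rows/columns
  have hMbox : ∀ s t, (box s ∨ box t) → M s t = B s t := by
    intro s t hst
    have hW0 : W s t = 0 := by
      rw [hWapp]
      rcases hst with hs | ht
      · rw [hqind0 s hs]; ring
      · rw [hqind0 t ht]; ring
    have hYKX0 : (Y * (K * X)) s t = 0 := by
      by_contra h0
      obtain ⟨k, hYk, hKXk⟩ := hYKX_supp s t h0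
      rcases hst with hs | ht
      · exact (hY_supp s k hYk).1 hs
      · exact (hKX_supp k t hKXk).1 ht
    rw [hM, Matrix.sub_apply, Matrix.add_apply, hW0, hYKX0]
    ring
  -- values of lam on the box
  have hlam1 : lam p₁ = 1 := by
    rw [hlam]
    dsimp only
    rw [if_neg h12, if_neg h13, if_neg h14]
  have hlam2 : lam p₂ = a⁻¹ := by
    rw [hlam]
    dsimp only
    rw [if_pos rfl]
  have hlam3 : lam p₃ = b⁻¹ := by
    rw [hlam]
    dsimp only
    rw [if_neg (fun h => h23 h.symm), if_pos rfl]
  have hlam4 : lam p₄ = a⁻¹ * c⁻¹ := by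
    rw [hlam]
    dsimp only
    rw [if_neg (fun h => h24 h.symm), if_neg (fun h => h34 h.symm), if_pos rfl]
  -- entry values of the new differential
  have vB12 : B p₁ p₂ = a := by rw [hBr1, if_pos rfl]
  have hd'12 : (Dg' * M * Dg) p₁ p₂ = 1 := by
    rw [hd'app, hMbox p₁ p₂ (Or.inl hbox1), vB12, hlam1, hlam2]
    rw [inv_one, one_mul, mul_inv_cancel₀ hd12]
  have hd'13 : (Dg' * M * Dg) p₁ p₃ = 1 := by
    rw [hd'app, hMbox p₁ p₃ (Or.inl hbox1), vB13, hlam1, hlam3]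
    rw [inv_one, one_mul, mul_inv_cancel₀ hd13]
  have hd'24 : (Dg' * M * Dg) p₂ p₄ = 1 := by
    rw [hd'app, hMbox p₂ p₄ (Or.inl hbox2), vB24, hlam2, hlam4, inv_inv]
    field_simp
  have hd'34 : (Dg' * M * Dg) p₃ p₄ = -1 := by
    rw [hd'app, hMbox p₃ p₄ (Or.inl hbox3), vB34, hlam3, hlam4, inv_inv]
    have hane : a ≠ 0 := hd12
    have hcne : c ≠ 0 := hd24
    field_simp
    linear_combination hsum
  have hd'zero : ∀ s t : Fin m,
      (s = p₁ ∨ s = p₂ ∨ s = p₃ ∨ s = p₄ ∨ t = p₁ ∨ t = p₂ ∨ t = p₃ ∨ t = p₄) →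
      ¬((s = p₁ ∧ t = p₂) ∨ (s = p₁ ∧ t = p₃) ∨ (s = p₂ ∧ t = p₄) ∨ (s = p₃ ∧ t = p₄)) →
      (Dg' * M * Dg) s t = 0 := by
    intro s t hst hnfp
    have hor : box s ∨ box t := by
      simp only [hbox]
      rcases hst with h | h | h | h | h | h | h | h
      exacts [Or.inl (Or.inl h), Or.inl (Or.inr (Or.inl h)), Or.inl (Or.inr (Or.inr (Or.inl h))),
        Or.inl (Or.inr (Or.inr (Or.inr h))), Or.inr (Or.inl h), Or.inr (Or.inr (Or.inl h)),
        Or.inr (Or.inr (Or.inr (Or.inl h))), Or.inr (Or.inr (Or.inr (Or.inr h)))]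
    rw [hd'app, hMbox s t hor, hBapp]
    by_cases hbs : box s
    · by_cases hbt : box t
      · rw [hbox0 s t hbs hbt hnfp]; ring
      · rw [hpind0 t hbt]; ring
    · rw [hpind0 s hbs]; ring
  -- d' satisfies the support condition
  have hd'supp : ∀ i j, (Dg' * M * Dg) i j ≠ 0 →
      Odd (C.grw j - C.grw i) ∧ -1 ≤ C.grw j - C.grw i ∧ -1 ≤ C.grz j - C.grz i := by
    intro i j h
    rw [hd'app] at h
    have hM0 : M i j ≠ 0 := by
      intro h0
      apply h
      rw [h0]; ring
    have hsplit : B i j ≠ 0 ∨ W i j ≠ 0 ∨ (Y * (K * X)) i j ≠ 0 := by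
      by_contra hc
      push_neg at hc
      apply hM0
      rw [hM, Matrix.sub_apply, Matrix.add_apply, hc.1, hc.2.1, hc.2.2]
      ring
    rcases hsplit with h0 | h0 | h0
    · have : C.d i j ≠ 0 := by
        intro hz
        apply h0
        rw [hBapp, hz]; ring
      exact C.d_supp i j this
    · have : C.d i j ≠ 0 := by
        intro hz
        apply h0
        rw [hWapp, hz]; ring
      exact C.d_supp i j this
    · obtain ⟨k, hYk, hKXk⟩ := hYKX_supp i j h0
      obtain ⟨hnbi, hdik, hbk⟩ := hY_supp i k hYk
      obtain ⟨hnbj, hcase⟩ := hKX_supp k j hKXk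
      obtain ⟨e1, e2⟩ := honly' i k (Or.inr hbk) (hnfp_s i k hnbi) hdik
      obtain ⟨o1, o2⟩ := hodd i k hdik
      rcases hcase with ⟨rfl, hd⟩ | ⟨rfl, hd⟩
      · obtain ⟨f1, f2⟩ := honly' p₁ j (Or.inl hbox1) (hnfp_t p₁ j hnbj) hd
        obtain ⟨q1, q2⟩ := hodd p₁ j hd
        exact ⟨Int.odd_iff.mpr (by omega), by omega, by omega⟩
      · obtain ⟨f1, f2⟩ := honly' p₂ j (Or.inl hbox2) (hnfp_t p₂ j hnbj) hd
        obtain ⟨q1, q2⟩ := hodd p₂ j hd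
        exact ⟨Int.odd_iff.mpr (by omega), by omega, by omega⟩
  -- chain map equations and invertibility
  have hfg : (R * Dg) * (Dg' * L) = 1 := by
    trans R * (Dg * Dg') * L
    · noncomm_ring
    rw [hDD', mul_one, hRL]
  have hgf : (Dg' * L) * (R * Dg) = 1 := by
    trans Dg' * (L * R) * Dg
    · noncomm_ring
    rw [hLR, mul_one, hD'D]
  have hd'sq : (Dg' * M * Dg) * (Dg' * M * Dg) = 0 := by
    trans Dg' * ((M * (Dg * Dg')) * M) * Dg
    · noncomm_ring
    rw [hDD', mul_one, hMM, mul_zero, zero_mul]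
  have hfchain : C.d * (R * Dg) = (R * Dg) * (Dg' * M * Dg) := by
    rw [← hMain]
    trans R * (Dg * Dg') * (L * C.d * R) * Dg
    · rw [hDD', mul_one]
      trans (R * L) * (C.d * R) * Dg
      · rw [hRL, one_mul]; noncomm_ring
      · noncomm_ring
    · noncomm_ring
  have hgchain : (Dg' * M * Dg) * (Dg' * L) = (Dg' * L) * C.d := by
    rw [← hMain]
    trans Dg' * (L * C.d * R) * (Dg * Dg') * L
    · noncomm_ring
    rw [hDD', mul_one]
    trans Dg' * (L * C.d) * (R * L)
    · noncomm_ring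
    rw [hRL, mul_one]
    noncomm_ring
  exact ⟨{ grw := C.grw, grz := C.grz, parity := C.parity, d := Dg' * M * Dg,
           d_sq := hd'sq, d_supp := hd'supp },
    rfl, rfl,
    ⟨R * Dg, Dg' * L, ⟨hfsupp, hfchain⟩, ⟨hgsupp, hgchain⟩, hfg, hgf⟩,
    hd'12, hd'13, hd'24, hd'34, hd'zero⟩
end
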